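/- arXiv:1105.5940 — 12 statements merged into one kernel-verified Lean document; each statement's English description precedes it below -/
import Mathlib

section
/- Let • and ⋆ be presemifield multiplications on F, and let M and L be additive bijections of F. Then the set of maps {x ↦ x ⋆ z : z ∈ F} is equal to the set of maps {x ↦ L(M⁻¹(x) • y) : y ∈ F} if and only if there exists an additive bijection N of F such that M(x) ⋆ N(y) = L(x • y) for all x, y ∈ F. -/
/-!
Both sides say that the two families of maps `x ↦ x ⋆ z` and `x ↦ L (M⁻¹ x • y)` are the same
family, up to a reindexing `N` of the parameter. Since a presemifield multiplication is injective
in its right argument, each family is indexed injectively by its parameter, so the reindexing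
relating two equal families is a bijection, and it is additive because both multiplications are
additive in the right argument.
-/

open Function

section ColumnMaps

variable {X Y W Z : Type*}

theorem injective_swap_of_injective_apply {g : X → Y → Z} (x : X) (hx : Injective (g x)) :
    Injective (swap g) :=
  fun _ _ h => hx (congrFun h x)

variable [AddGroup Y] [AddGroup W] [AddGroup Z]

theorem injective_of_map_add_of_map_eq_zero {f : Y → Z} (hadd : ∀ a b, f (a + b) = f a + f b)
    (hzero : ∀ a, f a = 0 → a = 0) : Injective f :=
  (injective_iff_map_eq_zero (AddMonoidHom.mk' f hadd)).mpr hzero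

theorem exists_addMonoidHom_of_range_swap_subset {star : X → Y → Z} {g : X → W → Z}
    (hstar_add : ∀ x a b, star x (a + b) = star x a + star x b)
    (hg_add : ∀ x a b, g x (a + b) = g x a + g x b) (hstar_inj : Injective (swap star))
    (hsub : Set.range (swap g) ⊆ Set.range (swap star)) :
    ∃ N : W →+ Y, ∀ x y, star x (N y) = g x y := by
  choose N hN using fun y => hsub (Set.mem_range_self y)
  have hN' : ∀ x y, star x (N y) = g x y := fun x y => congrFun (hN y) x
  refine ⟨AddMonoidHom.mk' N fun a b => hstar_inj ?_, hN'⟩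
  funext x
  simp only [swap, hstar_add, hN', hg_add]

theorem range_swap_eq_iff_exists_addEquiv {star : X → Y → Z} {g : X → W → Z}
    (hstar_add : ∀ x a b, star x (a + b) = star x a + star x b)
    (hg_add : ∀ x a b, g x (a + b) = g x a + g x b)
    (hstar_inj : Injective (swap star)) (hg_inj : Injective (swap g)) :
    Set.range (swap star) = Set.range (swap g) ↔ ∃ N : W ≃+ Y, ∀ x y, star x (N y) = g x y := by
  constructor
  · intro hrange
    obtain ⟨N, hN⟩ := exists_addMonoidHom_of_range_swap_subset hstar_add hg_add hstar_inj
      hrange.symm.subset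
    obtain ⟨N', hN'⟩ := exists_addMonoidHom_of_range_swap_subset hg_add hstar_add hg_inj
      hrange.subset
    have hleft : ∀ y, N' (N y) = y := fun y => hg_inj <| funext fun x => by
      simp only [swap, hN', hN]
    have hright : ∀ z, N (N' z) = z := fun z => hstar_inj <| funext fun x => by
      simp only [swap, hN, hN']
    exact ⟨{ N with invFun := N', left_inv := hleft, right_inv := hright }, hN⟩
  · rintro ⟨N, hN⟩
    have hcomp : swap star ∘ N = swap g := funext fun y => funext fun x => hN x y
    rw [← hcomp, EquivLike.range_comp]

end ColumnMaps

theorem stmt0_general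
    (F : Type*) [Field F]
    (bul star : F → F → F)
    (hbul_addr : ∀ a b c : F, bul a (b + c) = bul a b + bul a c)
    (hbul_nzd : ∀ a b : F, bul a b = 0 → a = 0 ∨ b = 0)
    (hstar_addr : ∀ a b c : F, star a (b + c) = star a b + star a c)
    (hstar_nzd : ∀ a b : F, star a b = 0 → a = 0 ∨ b = 0)
    (M L : F ≃+ F) :
    ({f : F → F | ∃ z : F, f = fun x => star x z} =
      {f : F → F | ∃ y : F, f = fun x => L (bul (M.symm x) y)}) ↔
      ∃ N : F ≃+ F, ∀ x y : F, star (M x) (N y) = L (bul x y) := by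
  set g : F → F → F := fun x y => L (bul (M.symm x) y)
  have hg_add : ∀ x a b, g x (a + b) = g x a + g x b := fun x a b => by
    simp only [g, hbul_addr, map_add]
  have hstar_inj : Injective (swap star) := injective_swap_of_injective_apply 1 <|
    injective_of_map_add_of_map_eq_zero (hstar_addr 1) fun z hz =>
      (hstar_nzd 1 z hz).resolve_left one_ne_zero
  have hbul_inj : Injective (bul 1) := injective_of_map_add_of_map_eq_zero (hbul_addr 1)
    fun y hy => (hbul_nzd 1 y hy).resolve_left one_ne_zero
  have hg_inj : Injective (swap g) := injective_swap_of_injective_apply (M 1) <| by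
    simp only [g, AddEquiv.symm_apply_apply]
    exact L.injective.comp hbul_inj
  have hsets : ∀ h : F → F → F, {f : F → F | ∃ z, f = fun x => h x z} = Set.range (swap h) :=
    fun h => Set.ext fun f => exists_congr fun z => eq_comm
  rw [hsets, hsets, range_swap_eq_iff_exists_addEquiv hstar_addr hg_add hstar_inj hg_inj]
  refine exists_congr fun N => M.symm.toEquiv.forall_congr_left.trans (forall_congr' fun x => ?_)
  simp [g]

/-- For presemifield multiplications `•` and `⋆` on a finite field `F` of
order `p^n`, and additive bijections `M`, `L` of `F`, the spread set
`{x ↦ x ⋆ z | z ∈ F}` equals `{x ↦ L (M⁻¹ x • y) | y ∈ F}` iff there is an additive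
bijection `N` with `M x ⋆ N y = L (x • y)` for all `x, y`. -/
theorem stmt0 (p n : ℕ) (hp : p.Prime) (hn : 1 ≤ n)
    (F : Type*) [Field F] [Fintype F] (hcard : Fintype.card F = p ^ n)
    (bul star : F → F → F)
    (hbul_addl : ∀ a b c : F, bul (a + b) c = bul a c + bul b c)
    (hbul_addr : ∀ a b c : F, bul a (b + c) = bul a b + bul a c)
    (hbul_nzd : ∀ a b : F, bul a b = 0 → a = 0 ∨ b = 0)
    (hstar_addl : ∀ a b c : F, star (a + b) c = star a c + star b c)
    (hstar_addr : ∀ a b c : F, star a (b + c) = star a b + star a c)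
    (hstar_nzd : ∀ a b : F, star a b = 0 → a = 0 ∨ b = 0)
    (M L : F ≃+ F) :
    ({f : F → F | ∃ z : F, f = fun x => star x z} =
      {f : F → F | ∃ y : F, f = fun x => L (bul (M.symm x) y)}) ↔
      ∃ N : F ≃+ F, ∀ x y : F, star (M x) (N y) = L (bul x y) :=
  stmt0_general F bul star hbul_addr hbul_nzd hstar_addr hstar_nzd M L
end

section
/- Let • and ⋆ be presemifield multiplications on F such that for every y ∈ F the maps x ↦ x • y and x ↦ x ⋆ y are F_q-linear, i.e. (λx) • y = λ(x • y) and (λx) ⋆ y = λ(x ⋆ y) for all λ ∈ F with λ^q = λ and all x, y ∈ F. If M, N, L are additive bijections of F satisfying M(x) ⋆ N(y) = L(x • y) for all x, y ∈ F, then there exists a natural number e such that for all λ ∈ F with λ^q = λ and all x ∈ F one has L(λ·x) = λ^{p^e}·L(x) and M(λ·x) = λ^{p^e}·M(x) (that is, L and M are F_q-semilinear with the same companion automorphism λ ↦ λ^{p^e}). -/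
/-!
The operators `T u = (u ⋆ ·)` form an additive group of endomorphisms of `(F, +)` whose nonzero
members are bijective, so its left idealizer `{ψ | ψ * T u ∈ range T for all u}` is a finite
domain, hence a field by Wedderburn's little theorem. By the `F_q`-linearity of `⋆` and of `•`
(transported through the isotopism), both `λ ↦ (λ * ·)` and `λ ↦ L ∘ (λ * ·) ∘ L⁻¹` embed `F_q`
into this field. Two embeddings of a finite field into a field differ by a field automorphism,
that is by a power `λ ↦ λ ^ p ^ e` of Frobenius. Evaluating at `L x` gives the claim for `L`;
multiplying `T (M x)` on the left and cancelling the injective map `T` gives it for `M`.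
-/

open Polynomial

namespace FiniteField

theorem exists_ringHom_eq_pow (p : ℕ) [Fact p.Prime] {K : Type*} [Field K] [Finite K] [CharP K p]
    (σ : K →+* K) : ∃ e : ℕ, ∀ x, σ x = x ^ p ^ e := by
  let _ : Algebra (ZMod p) K := ZMod.algebra K p
  let σ' : K →ₐ[ZMod p] K :=
    { σ with
      commutes' := RingHom.congr_fun (RingHom.ext_zmod (σ.comp (algebraMap _ K)) (algebraMap _ K)) }
  obtain ⟨e, he⟩ := (bijective_frobeniusAlgHom_pow (ZMod p) K).2 σ'
  refine ⟨e, fun x => ?_⟩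
  have := DFunLike.congr_fun he x
  simp only [AlgHom.coe_pow, coe_frobeniusAlgHom, pow_iterate, ZMod.card] at this
  exact this.symm

theorem exists_ringHom_comp_eq {K D : Type*} [Field K] [Finite K] [Field D]
    (φ ψ : K →+* D) : ∃ σ : K →+* K, φ = ψ.comp σ := by
  classical
  cases nonempty_fintype K
  -- the image of every embedding is the root set of `X ^ #K - X`, which has at most `#K` elements
  set P : D[X] := X ^ Fintype.card K - X
  have hP : P ≠ 0 := X_pow_card_sub_X_ne_zero D Fintype.one_lt_card
  have mem_roots (f : K →+* D) (x : K) : f x ∈ P.roots.toFinset := by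
    rw [Multiset.mem_toFinset, mem_roots hP, IsRoot, eval_sub, eval_pow, eval_X, ← map_pow,
      pow_card, sub_self]
  have hrange : Finset.univ.image ψ = P.roots.toFinset := by
    refine Finset.eq_of_subset_of_card_le (by simpa [Finset.subset_iff] using mem_roots ψ) ?_
    calc P.roots.toFinset.card ≤ Multiset.card P.roots := Multiset.toFinset_card_le _
      _ ≤ P.natDegree := card_roots' P
      _ = (Finset.univ.image ψ).card := by
        rw [X_pow_card_sub_X_natDegree_eq D Fintype.one_lt_card,
          Finset.card_image_of_injective _ ψ.injective, Finset.card_univ]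
  have hφψ (x : K) : ∃ y, ψ y = φ x := by
    simpa [← hrange] using mem_roots φ x
  choose σ hσ using hφψ
  refine ⟨{ toFun := σ, map_one' := ?_, map_mul' := ?_, map_zero' := ?_, map_add' := ?_ },
    RingHom.ext fun x => (hσ x).symm⟩ <;> intros <;> apply ψ.injective <;> simp [hσ]

end FiniteField

namespace AddSubgroup

variable {R : Type*} [Ring R]

def leftIdealizer (S : AddSubgroup R) : Subring R where
  carrier := {r | ∀ s ∈ S, r * s ∈ S}
  mul_mem' {a b} ha hb s hs := by simpa only [mul_assoc] using ha _ (hb s hs)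
  one_mem' s hs := by simpa only [one_mul] using hs
  add_mem' {a b} ha hb s hs := by simpa only [add_mul] using S.add_mem (ha s hs) (hb s hs)
  zero_mem' s _ := by simpa only [zero_mul] using S.zero_mem
  neg_mem' {a} ha s hs := by simpa only [neg_mul] using S.neg_mem (ha s hs)

variable {A V : Type*} [Ring A] [AddCommGroup V] [Module A V] [Finite V]
  {S : AddSubgroup (Module.End A V)}

theorem injective_of_mem_leftIdealizer (hS : ∀ s ∈ S, s ≠ 0 → Function.Injective s)
    (hS₀ : S ≠ ⊥) {r : Module.End A V} (hr : r ∈ S.leftIdealizer) (hr₀ : r ≠ 0) :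
    Function.Injective r := by
  obtain ⟨⟨s, hs⟩, hs₀⟩ := S.ne_bot_iff_exists_ne_zero.mp hS₀
  have hs_surj : Function.Surjective s :=
    Finite.injective_iff_surjective.mp (hS s hs (by simpa using hs₀))
  have hrs : r * s ≠ 0 := by
    contrapose! hr₀
    ext v
    obtain ⟨w, rfl⟩ := hs_surj v
    exact LinearMap.congr_fun hr₀ w
  exact Function.Injective.of_comp_right (g := s) (hS _ (hr s hs) hrs) hs_surj

theorem isDomain_leftIdealizer (hS : ∀ s ∈ S, s ≠ 0 → Function.Injective s) (hS₀ : S ≠ ⊥) :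
    IsDomain S.leftIdealizer := by
  have : Nontrivial V := by
    obtain ⟨s, hs₀⟩ := S.ne_bot_iff_exists_ne_zero.mp hS₀
    obtain ⟨v, hv⟩ := DFunLike.ne_iff.mp (by simpa using hs₀ : (s : Module.End A V) ≠ 0)
    exact nontrivial_of_ne _ _ hv
  have : NoZeroDivisors S.leftIdealizer := by
    refine ⟨fun {a b} hab => or_iff_not_imp_left.mpr fun ha => ?_⟩
    have ha' := injective_of_mem_leftIdealizer hS hS₀ a.2 (by simpa using ha)
    ext v
    apply ha'
    simpa using LinearMap.congr_fun (congrArg Subtype.val hab) v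
  exact NoZeroDivisors.to_isDomain _

theorem exists_eq_pow_of_mem_leftIdealizer (p : ℕ) [Fact p.Prime] {K : Type*} [Field K]
    [Finite K] [CharP K p] (hS : ∀ s ∈ S, s ≠ 0 → Function.Injective s) (hS₀ : S ≠ ⊥)
    (φ ψ : K →+* Module.End A V) (hφ : ∀ x, φ x ∈ S.leftIdealizer)
    (hψ : ∀ x, ψ x ∈ S.leftIdealizer) : ∃ e : ℕ, ∀ x, φ x = ψ (x ^ p ^ e) := by
  classical
  have := isDomain_leftIdealizer hS hS₀
  have : Finite (Module.End A V) := Finite.of_injective _ DFunLike.coe_injective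
  let _ : Fintype S.leftIdealizer := Fintype.ofFinite _
  let _ : DivisionRing S.leftIdealizer := Fintype.divisionRingOfIsDomain _
  let _ : Field S.leftIdealizer := littleWedderburn _
  obtain ⟨σ, hσ⟩ := FiniteField.exists_ringHom_comp_eq (φ.codRestrict _ hφ) (ψ.codRestrict _ hψ)
  obtain ⟨e, he⟩ := FiniteField.exists_ringHom_eq_pow p σ
  exact ⟨e, fun x => by simpa [he] using congrArg Subtype.val (RingHom.congr_fun hσ x)⟩

end AddSubgroup

namespace AddMonoidHom

variable {V W : Type*} [AddCommGroup V] [AddCommGroup W] {T : V →+ Module.End ℤ W}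

theorem injective_apply_of_eq_zero_or_eq_zero (hT : ∀ u w, T u w = 0 → u = 0 ∨ w = 0) {u : V}
    (hu : u ≠ 0) : Function.Injective (T u) :=
  (injective_iff_map_eq_zero _).mpr fun w hw => (hT u w hw).resolve_left hu

theorem injective_of_eq_zero_or_eq_zero [Nontrivial W] (hT : ∀ u w, T u w = 0 → u = 0 ∨ w = 0) :
    Function.Injective T := by
  obtain ⟨w, hw⟩ := exists_ne (0 : W)
  refine (injective_iff_map_eq_zero _).mpr fun u hu => (hT u w ?_).resolve_right hw
  simp [hu]

theorem injective_of_mem_range_of_eq_zero_or_eq_zero (hT : ∀ u w, T u w = 0 → u = 0 ∨ w = 0) :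
    ∀ s ∈ T.range, s ≠ 0 → Function.Injective s := by
  rintro _ ⟨u, rfl⟩ hu
  exact injective_apply_of_eq_zero_or_eq_zero hT fun h => hu (by simp [h])

theorem range_ne_bot_of_eq_zero_or_eq_zero [Nontrivial V] [Nontrivial W]
    (hT : ∀ u w, T u w = 0 → u = 0 ∨ w = 0) : T.range ≠ ⊥ := by
  obtain ⟨u, hu⟩ := exists_ne (0 : V)
  refine AddSubgroup.ne_bot_iff_exists_ne_zero.mpr
    ⟨⟨T u, T.mem_range.mpr ⟨u, rfl⟩⟩, fun h => hu ?_⟩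
  exact injective_of_eq_zero_or_eq_zero hT (by simpa using h)

end AddMonoidHom

theorem stmt1_general (p n h q : ℕ) (hp : p.Prime) (hq : q = p ^ h)
    (F : Type*) [Field F] [Fintype F] (hcard : Fintype.card F = p ^ n)
    (bul star : F → F → F)
    (hstar_addl : ∀ a b c : F, star (a + b) c = star a c + star b c)
    (hstar_addr : ∀ a b c : F, star a (b + c) = star a b + star a c)
    (hstar_nzd : ∀ a b : F, star a b = 0 → a = 0 ∨ b = 0)
    (hbul_lin : ∀ lam x y : F, lam ^ q = lam → bul (lam * x) y = lam * bul x y)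
    (hstar_lin : ∀ lam x y : F, lam ^ q = lam → star (lam * x) y = lam * star x y)
    (M N L : F ≃+ F)
    (hiso : ∀ x y : F, star (M x) (N y) = L (bul x y)) :
    ∃ e : ℕ, ∀ lam x : F, lam ^ q = lam →
      L (lam * x) = lam ^ (p ^ e) * L x ∧ M (lam * x) = lam ^ (p ^ e) * M x := by
  have : Fact p.Prime := ⟨hp⟩
  have : CharP F p := charP_of_card_eq_prime_pow hcard
  subst hq
  let K := (iterateFrobenius F p h).eqLocusField (RingHom.id F)
  have mem_K {lam : F} : lam ∈ K ↔ lam ^ p ^ h = lam := by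
    simp [K, RingHom.mem_eqLocusField, iterateFrobenius_def]
  let T : F →+ Module.End ℤ F := AddMonoidHom.mk'
    (fun u => (AddMonoidHom.mk' (star u) (hstar_addr u)).toIntLinearMap)
    fun a b => LinearMap.ext (hstar_addl a b)
  have hT : ∀ u w, T u w = 0 → u = 0 ∨ w = 0 := hstar_nzd
  let μ : F →+* Module.End ℤ F := Module.toModuleEnd ℤ F
  let A : F →+* Module.End ℤ F := L.toIntLinearEquiv.conjRingEquiv.toRingHom.comp μ
  have μ_mul_T {lam : F} (hlam : lam ∈ K) (u : F) : μ lam * T u = T (lam * u) :=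
    LinearMap.ext fun w => (hstar_lin lam u w (mem_K.mp hlam)).symm
  have A_mul_T {lam : F} (hlam : lam ∈ K) (u : F) : A lam * T u = T (M (lam * M.symm u)) := by
    refine LinearMap.ext fun w => ?_
    obtain ⟨x, rfl⟩ := M.surjective u
    obtain ⟨y, rfl⟩ := N.surjective w
    simp [A, μ, T, hiso, hbul_lin _ _ _ (mem_K.mp hlam)]
  obtain ⟨e, he⟩ := AddSubgroup.exists_eq_pow_of_mem_leftIdealizer p
    (AddMonoidHom.injective_of_mem_range_of_eq_zero_or_eq_zero hT)
    (AddMonoidHom.range_ne_bot_of_eq_zero_or_eq_zero hT)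
    (A.comp K.subtype) (μ.comp K.subtype)
    (fun lam => by rintro _ ⟨u, rfl⟩; exact ⟨_, (A_mul_T lam.2 u).symm⟩)
    (fun lam => by rintro _ ⟨u, rfl⟩; exact ⟨_, (μ_mul_T lam.2 u).symm⟩)
  refine ⟨e, fun lam x hlam => ?_⟩
  have hAe : A lam = μ (lam ^ p ^ e) := he ⟨lam, mem_K.mpr hlam⟩
  refine ⟨by simpa [A, μ] using LinearMap.congr_fun hAe (L x),
    AddMonoidHom.injective_of_eq_zero_or_eq_zero hT ?_⟩
  rw [← μ_mul_T (pow_mem (mem_K.mpr hlam) _), ← hAe, A_mul_T (mem_K.mpr hlam),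
    M.symm_apply_apply]

/-- If `•` and `⋆` are presemifield multiplications on `F` (of order `p^n`)
that are `F_q`-linear in the first argument (`q = p^h`, `h ∣ n`), and `(M, N, L)` is an
isotopism between them, then `L` and `M` are `F_q`-semilinear with the same companion
automorphism `λ ↦ λ^(p^e)`. -/
theorem stmt1 (p n h q : ℕ) (hp : p.Prime) (hn : 1 ≤ n) (hdvd : h ∣ n) (hq : q = p ^ h)
    (F : Type*) [Field F] [Fintype F] (hcard : Fintype.card F = p ^ n)
    (bul star : F → F → F)
    (hbul_addl : ∀ a b c : F, bul (a + b) c = bul a c + bul b c)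
    (hbul_addr : ∀ a b c : F, bul a (b + c) = bul a b + bul a c)
    (hbul_nzd : ∀ a b : F, bul a b = 0 → a = 0 ∨ b = 0)
    (hstar_addl : ∀ a b c : F, star (a + b) c = star a c + star b c)
    (hstar_addr : ∀ a b c : F, star a (b + c) = star a b + star a c)
    (hstar_nzd : ∀ a b : F, star a b = 0 → a = 0 ∨ b = 0)
    (hbul_lin : ∀ lam x y : F, lam ^ q = lam → bul (lam * x) y = lam * bul x y)
    (hstar_lin : ∀ lam x y : F, lam ^ q = lam → star (lam * x) y = lam * star x y)
    (M N L : F ≃+ F)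
    (hiso : ∀ x y : F, star (M x) (N y) = L (bul x y)) :
    ∃ e : ℕ, ∀ lam x : F, lam ^ q = lam →
      L (lam * x) = lam ^ (p ^ e) * L x ∧ M (lam * x) = lam ^ (p ^ e) * M x :=
  stmt1_general p n h q hp hq F hcard bul star hstar_addl hstar_addr hstar_nzd hbul_lin hstar_lin M
    N L hiso
end

section
/- Let •₁ and •₂ be presemifield multiplications on F, and let •₁ᵗ and •₂ᵗ : F × F → F be maps satisfying Tr((x •₁ y)·z) = Tr(x·(z •₁ᵗ y)) and Tr((x •₂ y)·z) = Tr(x·(z •₂ᵗ y)) for all x, y, z ∈ F. Let M, N, L be additive bijections of F and let M̄, L̄ : F → F be additive maps satisfying Tr(M(x)·z) = Tr(x·M̄(z)) and Tr(L(x)·z) = Tr(x·L̄(z)) for all x, z ∈ F. Then M(x) •₂ N(y) = L(x •₁ y) holds for all x, y ∈ F if and only if L̄(x) •₁ᵗ y = M̄(x •₂ᵗ N(y)) holds for all x, y ∈ F. -/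
/-!
Both conditions are adjoint to each other with respect to the trace form
`⟨u, v⟩ = Tr (u * v)`: for fixed `y`,
`Tr (M w •₂ N y * x) = Tr (w * M̄ (x •₂ᵗ N y))` and `Tr (L (w •₁ y) * x) = Tr (w * (L̄ x •₁ᵗ y))`,
so the two maps `w ↦ M w •₂ N y`, `w ↦ L (w •₁ y)` agree iff their adjoints
`x ↦ M̄ (x •₂ᵗ N y)`, `x ↦ L̄ x •₁ᵗ y` agree, because the trace form of the separable
extension `F / 𝔽_p` is nondegenerate.
-/

section TraceForm

variable {K L : Type*} [Field K] [Field L] [Algebra K L] [FiniteDimensional K L]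
  [Algebra.IsSeparable K L]

theorem eq_of_forall_trace_mul_eq {a b : L}
    (h : ∀ z : L, Algebra.trace K L (z * a) = Algebra.trace K L (z * b)) : a = b := by
  refine sub_eq_zero.mp ((traceForm_nondegenerate K L).1 _ fun z => ?_)
  rw [Algebra.traceForm_apply, mul_comm, mul_sub, map_sub, h, sub_self]

theorem funext_iff_of_trace_adjoint {f g f' g' : L → L}
    (hf : ∀ w x, Algebra.trace K L (f w * x) = Algebra.trace K L (w * f' x))
    (hg : ∀ w x, Algebra.trace K L (g w * x) = Algebra.trace K L (w * g' x)) :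
    (∀ w, f w = g w) ↔ (∀ x, f' x = g' x) := by
  constructor
  · intro hfg x
    exact eq_of_forall_trace_mul_eq (K := K) fun w => by rw [← hf, ← hg, hfg]
  · intro hfg w
    refine eq_of_forall_trace_mul_eq (K := K) fun x => ?_
    rw [mul_comm x, mul_comm x, hf, hg, hfg]

end TraceForm

theorem stmt2_general (p : ℕ) [Fact p.Prime]
    (F : Type*) [Field F] [Fintype F] [Algebra (ZMod p) F]
    (bul1 bul2 bul1t bul2t : F → F → F)
    (h1t : ∀ x y z : F, Algebra.trace (ZMod p) F (bul1 x y * z) =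
      Algebra.trace (ZMod p) F (x * bul1t z y))
    (h2t : ∀ x y z : F, Algebra.trace (ZMod p) F (bul2 x y * z) =
      Algebra.trace (ZMod p) F (x * bul2t z y))
    (M N L : F ≃+ F) (Mbar Lbar : F → F)
    (hMbar : ∀ x z : F, Algebra.trace (ZMod p) F (M x * z) =
      Algebra.trace (ZMod p) F (x * Mbar z))
    (hLbar : ∀ x z : F, Algebra.trace (ZMod p) F (L x * z) =
      Algebra.trace (ZMod p) F (x * Lbar z)) :
    (∀ x y : F, bul2 (M x) (N y) = L (bul1 x y)) ↔
      (∀ x y : F, bul1t (Lbar x) y = Mbar (bul2t x (N y))) := by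
  have : FiniteDimensional (ZMod p) F := Module.Finite.of_finite
  have adjoint_iff (y : F) : (∀ x, bul2 (M x) (N y) = L (bul1 x y)) ↔
      ∀ x, Mbar (bul2t x (N y)) = bul1t (Lbar x) y :=
    funext_iff_of_trace_adjoint (fun w x => by rw [h2t, hMbar]) (fun w x => by rw [hLbar, h1t])
  exact forall_comm.trans <| (forall_congr' adjoint_iff).trans <|
    forall_comm.trans <| forall₂_congr fun _ _ => eq_comm

/-- With `Tr` the absolute trace of `F` (of order `p^n`) over `F_p`,
adjoint-type multiplications `•ᵢᵗ` of presemifield multiplications `•ᵢ`, and adjoint maps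
`M̄`, `L̄` of the additive bijections `M`, `L`, the triple `(M, N, L)` is an isotopism
from `•₁` to `•₂` iff `L̄ x •₁ᵗ y = M̄ (x •₂ᵗ N y)` for all `x, y`. -/
theorem stmt2 (p n : ℕ) [Fact p.Prime] (hn : 1 ≤ n)
    (F : Type*) [Field F] [Fintype F] [Algebra (ZMod p) F]
    (hcard : Fintype.card F = p ^ n)
    (bul1 bul2 bul1t bul2t : F → F → F)
    (h1_addl : ∀ a b c : F, bul1 (a + b) c = bul1 a c + bul1 b c)
    (h1_addr : ∀ a b c : F, bul1 a (b + c) = bul1 a b + bul1 a c)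
    (h1_nzd : ∀ a b : F, bul1 a b = 0 → a = 0 ∨ b = 0)
    (h2_addl : ∀ a b c : F, bul2 (a + b) c = bul2 a c + bul2 b c)
    (h2_addr : ∀ a b c : F, bul2 a (b + c) = bul2 a b + bul2 a c)
    (h2_nzd : ∀ a b : F, bul2 a b = 0 → a = 0 ∨ b = 0)
    (h1t : ∀ x y z : F, Algebra.trace (ZMod p) F (bul1 x y * z) =
      Algebra.trace (ZMod p) F (x * bul1t z y))
    (h2t : ∀ x y z : F, Algebra.trace (ZMod p) F (bul2 x y * z) =
      Algebra.trace (ZMod p) F (x * bul2t z y))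
    (M N L : F ≃+ F) (Mbar Lbar : F → F)
    (hMbar_add : ∀ a b : F, Mbar (a + b) = Mbar a + Mbar b)
    (hLbar_add : ∀ a b : F, Lbar (a + b) = Lbar a + Lbar b)
    (hMbar : ∀ x z : F, Algebra.trace (ZMod p) F (M x * z) =
      Algebra.trace (ZMod p) F (x * Mbar z))
    (hLbar : ∀ x z : F, Algebra.trace (ZMod p) F (L x * z) =
      Algebra.trace (ZMod p) F (x * Lbar z)) :
    (∀ x y : F, bul2 (M x) (N y) = L (bul1 x y)) ↔
      (∀ x y : F, bul1t (Lbar x) y = Mbar (bul2t x (N y))) :=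
  stmt2_general p F bul1 bul2 bul1t bul2t h1t h2t M N L Mbar Lbar hMbar hLbar
end

section
/- There exists no nonzero a ∈ F with a^{q^ℓ} = −a and a^{q^d} = −a if and only if ℓ + d is odd. -/
/-!
Iterating `a ^ q ^ e = -a` with `q` odd gives `a ^ q ^ (e * m) = (-1) ^ m * a`. For a nonzero
solution, computing `a ^ q ^ (ℓ * d)` from either relation gives `(-1) ^ ℓ = (-1) ^ d`, so `ℓ + d`
is even. Conversely, if `ℓ + d` is even then the coprime `ℓ, d` are both odd, and any `a` with
`a ^ (q - 1) = -1` is a solution; such an `a` is a power of a non-square, since `2 * (q - 1)` divides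
`q ^ (2 * ℓ) - 1` and a non-square raised to half the order of `Fˣ` is `-1`.
-/

theorem pow_pow_mul_eq_neg_one_pow_mul {R : Type*} [Ring R] {a : R} {q e : ℕ} (hq : Odd q)
    (ha : a ^ q ^ e = -a) (m : ℕ) : a ^ q ^ (e * m) = (-1) ^ m * a := by
  induction m with
  | zero => simp
  | succ m ih =>
    rw [pow_mul, pow_succ', pow_mul, ha, hq.pow.pow.neg_pow, ← pow_mul, ih, pow_succ, mul_assoc,
      neg_one_mul, mul_neg]

theorem Odd.pow_pow_mul_eq_neg {R : Type*} [Ring R] {a : R} {q e m : ℕ} (hm : Odd m) (hq : Odd q)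
    (ha : a ^ q ^ e = -a) : a ^ q ^ (e * m) = -a := by
  rw [pow_pow_mul_eq_neg_one_pow_mul hq ha, hm.neg_one_pow, neg_one_mul]

theorem even_add_of_pow_pow_eq_neg {R : Type*} [Ring R] [IsDomain R] (h : (-1 : R) ≠ 1) {a : R}
    (ha : a ≠ 0) {q ℓ d : ℕ} (hq : Odd q) (hℓ : a ^ q ^ ℓ = -a) (hd : a ^ q ^ d = -a) :
    Even (ℓ + d) := by
  have hsign : (-1 : R) ^ d * a = (-1) ^ ℓ * a := by
    rw [← pow_pow_mul_eq_neg_one_pow_mul hq hℓ, ← pow_pow_mul_eq_neg_one_pow_mul hq hd, mul_comm]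
  rw [← neg_one_pow_eq_one_iff_even h, pow_add, ← mul_right_cancel₀ ha hsign, ← pow_add,
    (Even.add_self d).neg_one_pow]

theorem Odd.two_mul_sub_one_dvd_pow_two_mul_sub_one {q : ℕ} (hq : Odd q) (n : ℕ) :
    2 * (q - 1) ∣ q ^ (2 * n) - 1 := by
  obtain ⟨j, rfl⟩ := hq
  have hsq : 2 * (2 * j + 1 - 1) ∣ (2 * j + 1) ^ 2 - 1 := ⟨j + 1, by
    rw [Nat.add_sub_cancel, sq]; ring_nf; omega⟩
  simpa [pow_mul] using hsq.trans (Nat.sub_dvd_pow_sub_pow _ 1 n)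

theorem Nat.Coprime.odd_and_odd_of_even_add {ℓ d : ℕ} (hcop : Nat.Coprime ℓ d)
    (heven : Even (ℓ + d)) : Odd ℓ ∧ Odd d := by
  have hnot : ¬(2 ∣ ℓ ∧ 2 ∣ d) := fun h ↦ by
    simpa [hcop.gcd_eq_one] using Nat.dvd_gcd h.1 h.2
  rw [Nat.even_add] at heven
  simp only [← Nat.not_even_iff_odd, even_iff_two_dvd] at *
  tauto

theorem FiniteField.exists_ne_zero_pow_eq_neg_one {F : Type*} [Field F] [Fintype F]
    (hF : ringChar F ≠ 2) {k : ℕ} (hk : 2 * k ∣ Fintype.card F - 1) :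
    ∃ a : F, a ≠ 0 ∧ a ^ k = -1 := by
  obtain ⟨g, hg⟩ := FiniteField.exists_nonsquare hF
  have hg0 : g ≠ 0 := by rintro rfl; exact hg ⟨0, by simp⟩
  have hhalf : g ^ (Fintype.card F / 2) = -1 :=
    (FiniteField.pow_dichotomy hF hg0).resolve_left (mt (FiniteField.isSquare_iff hF hg0).2 hg)
  obtain ⟨m, hm⟩ := hk
  have hcard : Fintype.card F / 2 = m * k := by
    have := Nat.two_mul_odd_div_two (FiniteField.odd_card_of_char_ne_two hF)
    rw [hm] at this
    linarith
  exact ⟨g ^ m, pow_ne_zero m hg0, by rw [← pow_mul, ← hcard, hhalf]⟩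

theorem stmt3_general (p h q ℓ d : ℕ) (hpodd : Odd p) (hq : q = p ^ h) (hgcd : Nat.gcd ℓ d = 1)
    (F : Type*) [Field F] [Fintype F] (hcard : Fintype.card F = q ^ (2 * ℓ)) :
    (¬ ∃ a : F, a ≠ 0 ∧ a ^ (q ^ ℓ) = -a ∧ a ^ (q ^ d) = -a) ↔ Odd (ℓ + d) := by
  have hqodd : Odd q := hq ▸ hpodd.pow
  have hchar : ringChar F ≠ 2 := by
    simp [FiniteField.even_card_iff_char_two, hcard, Nat.odd_iff.mp hqodd.pow]
  constructor
  · intro hnone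
    by_contra heven
    obtain ⟨hℓ, hd⟩ := Nat.Coprime.odd_and_odd_of_even_add hgcd (Nat.not_odd_iff_even.mp heven)
    obtain ⟨a, ha0, ha⟩ := FiniteField.exists_ne_zero_pow_eq_neg_one hchar
      (hcard ▸ hqodd.two_mul_sub_one_dvd_pow_two_mul_sub_one ℓ)
    have haq : a ^ q ^ 1 = -a := by
      rw [pow_one, ← Nat.sub_add_cancel hqodd.pos, pow_succ, ha, neg_one_mul]
    exact hnone ⟨a, ha0, by simpa using hℓ.pow_pow_mul_eq_neg hqodd haq,
      by simpa using hd.pow_pow_mul_eq_neg hqodd haq⟩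
  · rintro hodd ⟨a, ha0, hℓ, hd⟩
    exact Nat.not_even_iff_odd.mpr hodd
      (even_add_of_pow_pow_eq_neg (Ring.neg_one_ne_one_of_char_ne_two hchar) ha0 hqodd hℓ hd)

/-- In a finite field `F` of order `q^(2ℓ)` (`q` an odd prime power,
`gcd ℓ d = 1`, `0 < d < 2ℓ`), there is no nonzero `a` with `a^(q^ℓ) = -a` and
`a^(q^d) = -a` iff `ℓ + d` is odd. -/
theorem stmt3 (p h q ℓ d : ℕ) (hp : p.Prime) (hpodd : Odd p) (hq : q = p ^ h) (hh : 1 ≤ h)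
    (hℓ : 0 < ℓ) (hd : 0 < d) (hd2 : d < 2 * ℓ) (hgcd : Nat.gcd ℓ d = 1)
    (F : Type*) [Field F] [Fintype F] (hcard : Fintype.card F = q ^ (2 * ℓ)) :
    (¬ ∃ a : F, a ≠ 0 ∧ a ^ (q ^ ℓ) = -a ∧ a ^ (q ^ d) = -a) ↔ Odd (ℓ + d) :=
  stmt3_general p h q ℓ d hpodd hq hgcd F hcard
end

section
/- Assume in addition that ℓ + d is odd. Then a nonzero element β ∈ F satisfies β^{(q^{2ℓ}−1)/gcd(q^ℓ+1, q^d+1)} ≠ 1 if and only if β is a nonsquare in F, i.e. there is no t ∈ F with t² = β. -/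
/-!
Write `g = gcd(q^ℓ + 1, q^d + 1)`. Since `q^m + 1 ∣ q^(2m) - 1`, `g` divides
`gcd(q^(2ℓ) - 1, q^(2d) - 1) = q^(2 gcd(ℓ, d)) - 1 = q^2 - 1`. One of `ℓ, d` is an even `m`, so
`q^2 - 1 ∣ q^m - 1` and `g ∣ (q^m + 1) - (q^m - 1) = 2`; as `q` is odd, `g = 2`. The exponent is
then `(|F| - 1) / 2`, and Euler's criterion in the field `F` of odd order finishes the proof.
-/

namespace Nat

lemma pow_add_one_dvd_pow_two_mul_sub_one (q m : ℕ) : q ^ m + 1 ∣ q ^ (2 * m) - 1 :=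
  ⟨q ^ m - 1, by rw [mul_comm 2, pow_mul, ← Nat.sq_sub_sq, one_pow]⟩

lemma dvd_two_of_dvd_pow_add_one_of_dvd_sq_sub_one {g q m : ℕ} (hq : 0 < q) (hm : Even m)
    (h₁ : g ∣ q ^ m + 1) (h₂ : g ∣ q ^ 2 - 1) : g ∣ 2 := by
  have hsub : g ∣ q ^ m - 1 := h₂.trans (pow_sub_one_dvd_pow_sub_one q (even_iff_two_dvd.mp hm))
  have hpos : 1 ≤ q ^ m := Nat.one_le_pow m q hq
  have htwo : q ^ m + 1 - (q ^ m - 1) = 2 := by omega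
  simpa [htwo] using Nat.dvd_sub h₁ hsub

theorem gcd_pow_add_one_pow_add_one_eq_two {q a b : ℕ} (hq : Odd q) (hab : a.gcd b = 1)
    (hodd : Odd (a + b)) : (q ^ a + 1).gcd (q ^ b + 1) = 2 := by
  set g := (q ^ a + 1).gcd (q ^ b + 1)
  have hga : g ∣ q ^ a + 1 := gcd_dvd_left _ _
  have hgb : g ∣ q ^ b + 1 := gcd_dvd_right _ _
  have hsq : g ∣ q ^ 2 - 1 := by
    have := dvd_gcd (hga.trans (pow_add_one_dvd_pow_two_mul_sub_one q a))
      (hgb.trans (pow_add_one_dvd_pow_two_mul_sub_one q b))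
    rwa [pow_sub_one_gcd_pow_sub_one, gcd_mul_left, hab, mul_one] at this
  have hdvd_two : g ∣ 2 := by
    rcases even_or_odd a with ha | ha
    · exact dvd_two_of_dvd_pow_add_one_of_dvd_sq_sub_one hq.pos ha hga hsq
    · have hb : Even b := by simpa [ha, parity_simps] using hodd
      exact dvd_two_of_dvd_pow_add_one_of_dvd_sq_sub_one hq.pos hb hgb hsq
  have htwo_dvd : 2 ∣ g :=
    dvd_gcd hq.pow.add_one.two_dvd hq.pow.add_one.two_dvd
  exact dvd_antisymm hdvd_two htwo_dvd

end Nat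

lemma FiniteField.ringChar_ne_two_of_odd_card {F : Type*} [Field F] [Fintype F]
    (h : Odd (Fintype.card F)) : ringChar F ≠ 2 := fun hchar => by
  have := FiniteField.even_card_of_char_two hchar
  rw [Nat.odd_iff] at h
  omega

theorem stmt4_general (p h q ℓ d : ℕ) (hpodd : Odd p) (hq : q = p ^ h)
    (hgcd : Nat.gcd ℓ d = 1)
    (hodd : Odd (ℓ + d))
    (F : Type*) [Field F] [Fintype F] (hcard : Fintype.card F = q ^ (2 * ℓ))
    (β : F) (hβ : β ≠ 0) :
    β ^ ((q ^ (2 * ℓ) - 1) / Nat.gcd (q ^ ℓ + 1) (q ^ d + 1)) ≠ 1 ↔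
      ¬ ∃ t : F, t ^ 2 = β := by
  have hqodd : Odd q := hq ▸ hpodd.pow
  have hcard_odd : Odd (Fintype.card F) := hcard ▸ hqodd.pow
  have hexp : (Fintype.card F - 1) / 2 = Fintype.card F / 2 := by
    obtain ⟨k, hk⟩ := hcard_odd
    omega
  rw [Nat.gcd_pow_add_one_pow_add_one_eq_two hqodd hgcd hodd, ← hcard, hexp, not_iff_not,
    ← FiniteField.isSquare_iff (FiniteField.ringChar_ne_two_of_odd_card hcard_odd) hβ,
    isSquare_iff_exists_sq]
  simp only [eq_comm]

/-- In a finite field `F` of order `q^(2ℓ)` (`q` an odd prime power,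
`gcd ℓ d = 1`, `0 < d < 2ℓ`, `ℓ + d` odd), a nonzero `β` satisfies
`β^((q^(2ℓ)-1)/gcd(q^ℓ+1, q^d+1)) ≠ 1` iff `β` is a nonsquare in `F`. -/
theorem stmt4 (p h q ℓ d : ℕ) (hp : p.Prime) (hpodd : Odd p) (hq : q = p ^ h) (hh : 1 ≤ h)
    (hℓ : 0 < ℓ) (hd : 0 < d) (hd2 : d < 2 * ℓ) (hgcd : Nat.gcd ℓ d = 1)
    (hodd : Odd (ℓ + d))
    (F : Type*) [Field F] [Fintype F] (hcard : Fintype.card F = q ^ (2 * ℓ))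
    (β : F) (hβ : β ≠ 0) :
    β ^ ((q ^ (2 * ℓ) - 1) / Nat.gcd (q ^ ℓ + 1) (q ^ d + 1)) ≠ 1 ↔
      ¬ ∃ t : F, t ^ 2 = β :=
  stmt4_general p h q ℓ d hpodd hq hgcd hodd F hcard β hβ
end

section
/- For every y ∈ F one has ( (1/4)(y − y^{q^ℓ} + g(y)) )^{q^{2ℓ−2}} = (1/4)(y − y^{q^ℓ} − g(y)); that is, f(y)^{q^{2ℓ−2}} = (1/4)(y − y^{q^ℓ} − g(y)). -/
/-!
Raising to the power `q^(2ℓ-2)` inverts the `q²`-Frobenius `τ` on `F`, so it suffices to show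
that `τ` sends `y - y^(q^ℓ) - g(y)` to `y - y^(q^ℓ) + g(y)`. The three sums making up `g(y)` are
alternating sums `S = ∑_{i<n} (-1)^i a_i` along `τ`-orbits (`τ a_i = a_{i+1}`), so they telescope:
`τ S = a_0 - S - (-1)^n a_n`. Since `y^(q^(2ℓ)) = y`, the boundary terms of the three sums cancel
against `τ(y - y^(q^ℓ))`.
-/

open Finset

theorem RingHom.map_alternating_sum_of_map_eq_succ {R : Type*} [CommRing R] (φ : R →+* R)
    (a : ℕ → R) (ha : ∀ i, φ (a i) = a (i + 1)) (n : ℕ) :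
    φ (∑ i ∈ Finset.range n, (-1) ^ i * a i) =
      a 0 - ∑ i ∈ Finset.range n, (-1) ^ i * a i - (-1) ^ n * a n := by
  induction n with
  | zero => simp
  | succ n ih =>
    rw [sum_range_succ, map_add, ih, map_mul, map_pow, map_neg, map_one, ha, pow_succ]
    ring

theorem Finset.sum_Icc_eq_sum_range {M : Type*} [AddCommMonoid M] (f : ℕ → M) (m n : ℕ) :
    ∑ i ∈ Icc m n, f i = ∑ i ∈ range (n + 1 - m), f (m + i) := by
  rw [← Ico_add_one_right_eq_Icc, sum_Ico_eq_sum_range]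

section FrobeniusOrbit

variable {R : Type*} [CommRing R]

/-- The paper's `g(y)` for `ℓ = 2k+1`, in terms of the Frobenius orbit `s m = y^(q^m)`. -/
def orbitG (s : ℕ → R) (k : ℕ) : R :=
  (∑ i ∈ Icc 1 (2 * k), (-1 : R) ^ (i + 1) * s (2 * i)) +
    (∑ j ∈ Icc 0 (k - 1), (-1 : R) ^ (k + j + 1) * s (2 * j + 1)) +
    (∑ t ∈ Icc (k + 1) (2 * k), (-1 : R) ^ (k + t) * s (2 * t + 1))

theorem orbitG_eq_alternating_sums (s : ℕ → R) {k : ℕ} (hk : 1 ≤ k) :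
    orbitG s k = ∑ i ∈ range (2 * k), (-1) ^ i * s (2 * i + 2) +
      (-1) ^ (k + 1) * ∑ j ∈ range k, (-1) ^ j * s (2 * j + 1) -
      ∑ t ∈ range k, (-1) ^ t * s (2 * t + (2 * k + 3)) := by
  have hA : ∑ i ∈ Icc 1 (2 * k), (-1 : R) ^ (i + 1) * s (2 * i) =
      ∑ i ∈ range (2 * k), (-1) ^ i * s (2 * i + 2) := by
    rw [sum_Icc_eq_sum_range, Nat.add_sub_cancel]
    refine sum_congr rfl fun i _ => ?_
    rw [show 1 + i + 1 = i + 2 by ring, pow_add, neg_one_sq, mul_one,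
      show 2 * (1 + i) = 2 * i + 2 by ring]
  have hB : ∑ j ∈ Icc 0 (k - 1), (-1 : R) ^ (k + j + 1) * s (2 * j + 1) =
      (-1) ^ (k + 1) * ∑ j ∈ range k, (-1) ^ j * s (2 * j + 1) := by
    rw [sum_Icc_eq_sum_range, Nat.sub_add_cancel hk, Nat.sub_zero, mul_sum]
    refine sum_congr rfl fun j _ => ?_
    rw [zero_add, show k + j + 1 = k + 1 + j by ring, pow_add, mul_assoc]
  have hC : ∑ t ∈ Icc (k + 1) (2 * k), (-1 : R) ^ (k + t) * s (2 * t + 1) =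
      -∑ t ∈ range k, (-1) ^ t * s (2 * t + (2 * k + 3)) := by
    rw [sum_Icc_eq_sum_range, show 2 * k + 1 - (k + 1) = k by omega, ← sum_neg_distrib]
    refine sum_congr rfl fun t _ => ?_
    rw [show k + (k + 1 + t) = 2 * k + 1 + t by ring, pow_add, pow_succ, pow_mul, neg_one_sq,
      show 2 * (k + 1 + t) + 1 = 2 * t + (2 * k + 3) by ring]
    ring
  rw [orbitG, hA, hB, hC, sub_eq_add_neg]

theorem map_sub_sub_orbitG (τ : R →+* R) (s : ℕ → R) {k : ℕ} (hk : 1 ≤ k)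
    (hτ : ∀ m, τ (s m) = s (m + 2)) (hper : ∀ m, s (m + (4 * k + 2)) = s m) :
    τ (s 0 - s (2 * k + 1) - orbitG s k) = s 0 - s (2 * k + 1) + orbitG s k := by
  have shift : ∀ c i, τ (s (2 * i + c)) = s (2 * (i + 1) + c) := fun c i => by
    rw [hτ]; ring_nf
  have tA := τ.map_alternating_sum_of_map_eq_succ _ (shift 2) (2 * k)
  have tB := τ.map_alternating_sum_of_map_eq_succ _ (shift 1) k
  have tC := τ.map_alternating_sum_of_map_eq_succ _ (shift (2 * k + 3)) k
  have wrap0 : s (2 * (2 * k) + 2) = s 0 := by rw [← hper 0]; ring_nf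
  have wrap1 : s (2 * k + (2 * k + 3)) = s 1 := by rw [← hper 1]; ring_nf
  simp only [mul_zero, zero_add, wrap0, wrap1, pow_mul, neg_one_sq, one_pow, one_mul]
    at tA tB tC
  have hsq : ((-1 : R) ^ k) ^ 2 = 1 := by rw [← pow_mul, mul_comm, pow_mul, neg_one_sq, one_pow]
  rw [orbitG_eq_alternating_sums s hk]
  simp only [map_add, map_sub, map_mul, map_pow, map_neg, map_one, tA, tB, tC, hτ]
  linear_combination (-s (2 * k + 1)) * hsq

end FrobeniusOrbit

theorem stmt6_general (p h q k ℓ : ℕ) (hp : p.Prime) (hq : q = p ^ h)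
    (hk : 1 ≤ k) (hℓ : ℓ = 2 * k + 1)
    (F : Type*) [Field F] [Fintype F] (hcard : Fintype.card F = q ^ (2 * ℓ))
    (g f : F → F)
    (hg : ∀ y : F, g y =
      (∑ i ∈ Finset.Icc 1 (ℓ - 1), (-1 : F) ^ (i + 1) * y ^ (q ^ (2 * i))) +
      (∑ j ∈ Finset.Icc 0 (k - 1), (-1 : F) ^ (k + j + 1) * y ^ (q ^ (2 * j + 1))) +
      (∑ t ∈ Finset.Icc (k + 1) (ℓ - 1), (-1 : F) ^ (k + t) * y ^ (q ^ (2 * t + 1))))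
    (hf : ∀ y : F, f y = (4 : F)⁻¹ * (y - y ^ (q ^ ℓ) + g y)) :
    ∀ y : F, (f y) ^ (q ^ (2 * ℓ - 2)) = (4 : F)⁻¹ * (y - y ^ (q ^ ℓ) - g y) := by
  subst hℓ
  intro y
  have : Fact p.Prime := ⟨hp⟩
  have : CharP F p := charP_of_card_eq_prime_pow (f := h * (2 * (2 * k + 1)))
    (by rw [hcard, hq, ← pow_mul])
  let τ := iterateFrobenius F p (h * 2)
  have hτ : ∀ x, τ x = x ^ q ^ 2 := fun x => by rw [iterateFrobenius_def, pow_mul, hq]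
  have hgy : g y = orbitG (fun m => y ^ q ^ m) k := by rw [hg, Nat.add_sub_cancel]; rfl
  have key := map_sub_sub_orbitG τ (fun m => y ^ q ^ m) hk
    (fun m => by rw [hτ, ← pow_mul, ← pow_add])
    (fun m => by
      rw [pow_add, pow_mul, show 4 * k + 2 = 2 * (2 * k + 1) by ring, ← hcard,
        FiniteField.pow_card])
  simp only [pow_zero, pow_one, ← hgy] at key
  have hfy : f y = τ ((4 : F)⁻¹ * (y - y ^ q ^ (2 * k + 1) - g y)) := by
    rw [map_mul, map_inv₀, map_ofNat, key, hf]
  rw [hfy, hτ, ← pow_mul, ← pow_add, show 2 + (2 * (2 * k + 1) - 2) = 2 * (2 * k + 1) by omega,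
    ← hcard, FiniteField.pow_card]

/-- In a finite field `F` of order `q^(2ℓ)` (`q` odd prime power,
`ℓ = 2k+1`, `k ≥ 1`), with `g` and `f` as in the paper, one has
`f(y)^(q^(2ℓ-2)) = (1/4)(y - y^(q^ℓ) - g y)` for every `y`. -/
theorem stmt6 (p h q k ℓ : ℕ) (hp : p.Prime) (hpodd : Odd p) (hq : q = p ^ h) (hh : 1 ≤ h)
    (hk : 1 ≤ k) (hℓ : ℓ = 2 * k + 1)
    (F : Type*) [Field F] [Fintype F] (hcard : Fintype.card F = q ^ (2 * ℓ))
    (g f : F → F)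
    (hg : ∀ y : F, g y =
      (∑ i ∈ Finset.Icc 1 (ℓ - 1), (-1 : F) ^ (i + 1) * y ^ (q ^ (2 * i))) +
      (∑ j ∈ Finset.Icc 0 (k - 1), (-1 : F) ^ (k + j + 1) * y ^ (q ^ (2 * j + 1))) +
      (∑ t ∈ Finset.Icc (k + 1) (ℓ - 1), (-1 : F) ^ (k + t) * y ^ (q ^ (2 * t + 1))))
    (hf : ∀ y : F, f y = (4 : F)⁻¹ * (y - y ^ (q ^ ℓ) + g y)) :
    ∀ y : F, (f y) ^ (q ^ (2 * ℓ - 2)) = (4 : F)⁻¹ * (y - y ^ (q ^ ℓ) - g y) :=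
  stmt6_general p h q k ℓ hp hq hk hℓ F hcard g f hg hf
end

section
/- The map φ : E → E defined by φ(γ) = γ + γ^{q^2} is a bijection, and its inverse is the map z ↦ (1/2)( Σ_{i=0}^{k} (−1)^i z^{q^{2i}} + Σ_{j=0}^{k−1} (−1)^{k+j+1} z^{q^{2j+1}} ); in particular φ applied to this expression returns z, for every z ∈ E. -/
/-!
Let `σ` be the `q`-power Frobenius of `E`; it is a ring endomorphism with `σ^ℓ = id`, and
`φ = 1 + τ` for `τ = σ²`, which also has order dividing `ℓ`. Since `ℓ` is odd,
`(1 + τ) ∑_{m<ℓ} (-τ)^m = 1 - (-τ)^ℓ = 2`, so `φ` is inverted by `½ ∑_{m<ℓ} (-1)^m τ^m`.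
Splitting this sum at `m = k + 1` and reducing `τ^m = σ^(2m)` modulo `σ^ℓ = id` gives the
displayed formula.
-/

open Finset

section AlternatingOrbitSum

variable {R : Type*} [CommRing R]

def alternatingOrbitSum (τ : R → R) (n : ℕ) (z : R) : R :=
  ∑ m ∈ range n, (-1) ^ m * τ^[m] z

theorem alternatingOrbitSum_add_map (τ : R →+* R) (n : ℕ) (z : R) :
    alternatingOrbitSum τ n z + τ (alternatingOrbitSum τ n z) = z - (-1) ^ n * τ^[n] z := by
  have hstep : ∀ m ∈ range n, (-1) ^ m * τ^[m] z + τ ((-1) ^ m * τ^[m] z) =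
      (-1) ^ m * τ^[m] z - (-1) ^ (m + 1) * τ^[m + 1] z := by
    intro m _
    rw [map_mul, map_pow, map_neg, map_one, ← Function.iterate_succ_apply' τ, pow_succ]
    ring
  rw [alternatingOrbitSum, map_sum, ← sum_add_distrib, sum_congr rfl hstep, sum_range_sub']
  simp

theorem alternatingOrbitSum_iterate_two (σ : R → R) {k : ℕ} {z : R}
    (hσ : σ^[2 * k + 1] z = z) :
    alternatingOrbitSum σ^[2] (2 * k + 1) z =
      ∑ i ∈ range (k + 1), (-1) ^ i * σ^[2 * i] z +
        ∑ j ∈ range k, (-1) ^ (k + j + 1) * σ^[2 * j + 1] z := by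
  have hwrap : ∀ j ∈ range k, (-1) ^ (k + 1 + j) * σ^[2 * (k + 1 + j)] z =
      (-1) ^ (k + j + 1) * σ^[2 * j + 1] z := by
    intro j _
    rw [show 2 * (k + 1 + j) = (2 * j + 1) + (2 * k + 1) by ring, Function.iterate_add_apply,
      hσ, add_right_comm]
  simp_rw [alternatingOrbitSum, ← Function.iterate_mul]
  rw [show 2 * k + 1 = (k + 1) + k by ring, sum_range_add, sum_congr rfl hwrap]

theorem half_alternatingOrbitSum_add_map {E : Type*} [Field E] (h2 : (2 : E) ≠ 0)
    (τ : E →+* E) {n : ℕ} (hn : Odd n) {z : E} (hz : τ^[n] z = z) :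
    2⁻¹ * alternatingOrbitSum τ n z + τ (2⁻¹ * alternatingOrbitSum τ n z) = z := by
  rw [map_mul, map_inv₀, map_ofNat, ← mul_add, alternatingOrbitSum_add_map, hz, hn.neg_one_pow,
    neg_one_mul, sub_neg_eq_add, ← two_mul, inv_mul_cancel_left₀ h2]

end AlternatingOrbitSum

theorem iterate_iterateFrobenius_apply {R : Type*} [CommSemiring R] (p : ℕ) [ExpChar R p]
    (h n : ℕ) (z : R) : (iterateFrobenius R p h)^[n] z = z ^ (p ^ h) ^ n := by
  rw [← iterateFrobenius_mul_apply, iterateFrobenius_def, pow_mul]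

theorem stmt7_general (p h q k ℓ : ℕ) (hp : p.Prime) (hpodd : Odd p) (hq : q = p ^ h)
    (hℓ : ℓ = 2 * k + 1)
    (E : Type*) [Field E] [Fintype E] (hcard : Fintype.card E = q ^ ℓ)
    (φ ψ : E → E)
    (hφ : ∀ γ : E, φ γ = γ + γ ^ (q ^ 2))
    (hψ : ∀ z : E, ψ z = (2 : E)⁻¹ *
      ((∑ i ∈ Finset.range (k + 1), (-1 : E) ^ i * z ^ (q ^ (2 * i))) +
       (∑ j ∈ Finset.range k, (-1 : E) ^ (k + j + 1) * z ^ (q ^ (2 * j + 1))))) :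
    Function.Bijective φ ∧ (∀ z : E, φ (ψ z) = z) ∧ (∀ z : E, ψ (φ z) = z) := by
  subst hℓ
  have := Fact.mk hp
  have : CharP E p := charP_of_card_eq_prime_pow (by rw [hcard, hq, ← pow_mul])
  have : ExpChar E p := ExpChar.prime hp
  have h2 : (2 : E) ≠ 0 := Ring.two_ne_zero <| by
    rw [ringChar.eq E p]
    rintro rfl
    exact absurd hpodd (by decide)
  set σ := iterateFrobenius E p h
  have hσ : ∀ (n : ℕ) (z : E), σ^[n] z = z ^ q ^ n := fun n z => by
    rw [iterate_iterateFrobenius_apply, hq]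
  have hσℓ : ∀ z : E, σ^[2 * k + 1] z = z := fun z => by rw [hσ, ← hcard, FiniteField.pow_card]
  set τ : E →+* E := σ ^ 2
  have hτ : ⇑τ = σ^[2] := RingHom.coe_pow σ 2
  have hτℓ : ∀ z : E, τ^[2 * k + 1] z = z := fun z => by
    rw [hτ, ← Function.iterate_mul, mul_comm, Function.iterate_mul, Function.iterate_fixed (hσℓ z)]
  have key : ∀ z : E, φ (ψ z) = z := fun z => by
    have hψz : ψ z = 2⁻¹ * alternatingOrbitSum τ (2 * k + 1) z := by
      simp only [hψ, ← hσ, hτ, alternatingOrbitSum_iterate_two σ (hσℓ z)]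
    rw [hφ, ← hσ 2, ← hτ, hψz]
    exact half_alternatingOrbitSum_add_map h2 τ (odd_two_mul_add_one k) (hτℓ z)
  have hbij : Function.Bijective φ := Function.Surjective.bijective_of_finite fun z => ⟨ψ z, key z⟩
  exact ⟨hbij, key, Function.rightInverse_of_injective_of_leftInverse hbij.1 key⟩

/-- In a finite field `E` of order `q^ℓ` (`q` odd prime power, `ℓ = 2k+1`,
`k ≥ 1`), the map `φ(γ) = γ + γ^(q^2)` is a bijection whose inverse is
`z ↦ (1/2)(∑_{i=0}^{k} (-1)^i z^(q^(2i)) + ∑_{j=0}^{k-1} (-1)^(k+j+1) z^(q^(2j+1)))`. -/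
theorem stmt7 (p h q k ℓ : ℕ) (hp : p.Prime) (hpodd : Odd p) (hq : q = p ^ h) (hh : 1 ≤ h)
    (hk : 1 ≤ k) (hℓ : ℓ = 2 * k + 1)
    (E : Type*) [Field E] [Fintype E] (hcard : Fintype.card E = q ^ ℓ)
    (φ ψ : E → E)
    (hφ : ∀ γ : E, φ γ = γ + γ ^ (q ^ 2))
    (hψ : ∀ z : E, ψ z = (2 : E)⁻¹ *
      ((∑ i ∈ Finset.range (k + 1), (-1 : E) ^ i * z ^ (q ^ (2 * i))) +
       (∑ j ∈ Finset.range k, (-1 : E) ^ (k + j + 1) * z ^ (q ^ (2 * j + 1))))) :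
    Function.Bijective φ ∧ (∀ z : E, φ (ψ z) = z) ∧ (∀ z : E, ψ (φ z) = z) :=
  stmt7_general p h q k ℓ hp hpodd hq hℓ E hcard φ ψ hφ hψ
end

section
/- Every y ∈ F can be written uniquely as y = A + (B^{q^2} + B)·η with A, B ∈ F_{q^ℓ}; moreover, for this unique pair, A = (y + y^{q^ℓ})/2 and B = (y − y^{q^ℓ} − g(y))/(4η). -/
/-! Let `σ` be the `q`-power Frobenius, so `σ ^ (2ℓ) = 1` on `F`, and `τ = σ ^ ℓ` is the involution
fixing `F_{q^ℓ}`; as `ℓ` is odd, `τ η = -η`. Applying `τ` to `y = A + (σ²B + B)η` gives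
`A = (y + τy)/2` and `z := y - τy = 2(σ²B + B)η`. The map `B ↦ σ²B + B` is injective, since
`σ²x = -x` forces `x = σ^(2ℓ) x = (-1)^ℓ x = -x`, and `S z = ∑_{i<ℓ} (-1)^i σ^(2i) z` inverts it up
to a factor `2`: `σ²(S z) + S z` telescopes to `z + σ^(2ℓ) z = 2z`. Finally, reindexing the
exponents modulo `2ℓ` shows `g y = z - S z`. -/

open Finset

section

variable {R : Type*} [CommRing R] (f : ℕ → R) (k : ℕ)

lemma sum_range_neg_one_pow_mul_even :
    ∑ i ∈ range (2 * k + 1), (-1) ^ i * f (2 * i)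
      = f 0 - ∑ i ∈ Icc 1 (2 * k), (-1) ^ (i + 1) * f (2 * i) := by
  rw [sum_range_succ', ← Ico_add_one_right_eq_Icc, sum_Ico_eq_sum_range, Nat.add_sub_cancel,
    sub_eq_add_neg, ← sum_neg_distrib, add_comm (f 0)]
  simp only [mul_zero, pow_zero, one_mul]
  congr 1
  refine sum_congr rfl fun i _ => ?_
  rw [add_comm 1 i, pow_succ]
  ring

lemma sum_range_neg_one_pow_mul_odd (hk : 1 ≤ k) (hf : ∀ n, f (n + 2 * (2 * k + 1)) = f n) :
    ∑ i ∈ range (2 * k + 1), (-1) ^ i * f (2 * i + (2 * k + 1))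
      = f (2 * k + 1) + ∑ t ∈ Icc (k + 1) (2 * k), (-1) ^ (k + t) * f (2 * t + 1)
        + ∑ j ∈ Icc 0 (k - 1), (-1) ^ (k + j + 1) * f (2 * j + 1) := by
  have hsplit := sum_range_add (fun i => (-1 : R) ^ i * f (2 * i + (2 * k + 1))) (k + 1) k
  rw [show k + 1 + k = 2 * k + 1 by omega] at hsplit
  rw [hsplit, sum_range_succ', ← Ico_add_one_right_eq_Icc, sum_Ico_eq_sum_range,
    show 2 * k + 1 - (k + 1) = k by omega, ← Nat.range_eq_Icc_zero_sub_one k (by omega)]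
  simp only [mul_zero, zero_add, pow_zero, one_mul]
  rw [add_comm _ (f (2 * k + 1)), add_assoc, add_assoc]
  congr 2
  · refine sum_congr rfl fun i _ => ?_
    rw [show k + (k + 1 + i) = 2 * k + (i + 1) by omega, pow_add (-1 : R) (2 * k),
      (even_two_mul k).neg_one_pow, one_mul,
      show 2 * (i + 1) + (2 * k + 1) = 2 * (k + 1 + i) + 1 by omega]
  · refine sum_congr rfl fun j _ => ?_
    rw [show 2 * (k + 1 + j) + (2 * k + 1) = 2 * j + 1 + 2 * (2 * k + 1) by omega, hf,
      show k + 1 + j = k + j + 1 by omega]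

end

namespace RingHom

section CommRing

variable {R : Type*} [CommRing R] (σ : R →+* R)

lemma pow_apply_pow_apply (m n : ℕ) (x : R) : (σ ^ m) ((σ ^ n) x) = (σ ^ (m + n)) x := by
  rw [pow_add]; rfl

def alternatingEvenSum (n : ℕ) (z : R) : R :=
  ∑ i ∈ Finset.range n, (-1) ^ i * (σ ^ (2 * i)) z

lemma pow_two_apply_alternatingEvenSum_add (n : ℕ) (z : R) :
    (σ ^ 2) (σ.alternatingEvenSum n z) + σ.alternatingEvenSum n z
      = z - (-1) ^ n * (σ ^ (2 * n)) z := by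
  induction n with
  | zero => simp [alternatingEvenSum]
  | succ n ih =>
    rw [alternatingEvenSum, sum_range_succ, ← alternatingEvenSum, map_add, map_mul, map_pow,
      map_neg, map_one, pow_apply_pow_apply, show 2 + 2 * n = 2 * (n + 1) by ring]
    linear_combination ih

lemma pow_apply_alternatingEvenSum (m n : ℕ) (z : R) :
    (σ ^ m) (σ.alternatingEvenSum n z) = σ.alternatingEvenSum n ((σ ^ m) z) := by
  simp only [alternatingEvenSum, map_sum, map_mul, map_pow, map_neg, map_one,
    pow_apply_pow_apply, add_comm m]

lemma alternatingEvenSum_neg (n : ℕ) (z : R) :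
    σ.alternatingEvenSum n (-z) = -σ.alternatingEvenSum n z := by
  simp only [alternatingEvenSum, map_neg, mul_neg, sum_neg_distrib]

lemma pow_apply_of_apply_eq_neg {x : R} (hx : σ x = -x) (n : ℕ) : (σ ^ n) x = (-1) ^ n * x := by
  induction n with
  | zero => simp
  | succ n ih =>
    rw [← pow_apply_pow_apply, pow_one, hx, map_neg, ih, pow_succ]
    ring

lemma pow_two_apply_alternatingEvenSum_add_of_odd {ℓ : ℕ} (hℓ : Odd ℓ) (hσ : σ ^ (2 * ℓ) = 1)
    (z : R) : (σ ^ 2) (σ.alternatingEvenSum ℓ z) + σ.alternatingEvenSum ℓ z = 2 * z := by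
  rw [pow_two_apply_alternatingEvenSum_add, hσ, hℓ.neg_one_pow, coe_one, id_eq]
  ring

lemma pow_apply_alternatingEvenSum_sub {ℓ : ℕ} (hσ : σ ^ (2 * ℓ) = 1) (y : R) :
    (σ ^ ℓ) (σ.alternatingEvenSum ℓ (y - (σ ^ ℓ) y))
      = -σ.alternatingEvenSum ℓ (y - (σ ^ ℓ) y) := by
  rw [pow_apply_alternatingEvenSum, map_sub, pow_apply_pow_apply, ← two_mul, hσ, coe_one, id_eq,
    ← alternatingEvenSum_neg, neg_sub]

lemma alternatingEvenSum_sub_pow_apply {k : ℕ} (hk : 1 ≤ k) (hσ : σ ^ (2 * (2 * k + 1)) = 1)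
    (y : R) :
    σ.alternatingEvenSum (2 * k + 1) (y - (σ ^ (2 * k + 1)) y) = y - (σ ^ (2 * k + 1)) y -
      ((∑ i ∈ Icc 1 (2 * k), (-1) ^ (i + 1) * (σ ^ (2 * i)) y) +
      (∑ j ∈ Icc 0 (k - 1), (-1) ^ (k + j + 1) * (σ ^ (2 * j + 1)) y) +
      (∑ t ∈ Icc (k + 1) (2 * k), (-1) ^ (k + t) * (σ ^ (2 * t + 1)) y)) := by
  have heven := sum_range_neg_one_pow_mul_even (fun n => (σ ^ n) y) k
  have hodd := sum_range_neg_one_pow_mul_odd (fun n => (σ ^ n) y) k hk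
    fun n => by rw [pow_add, hσ, mul_one]
  beta_reduce at heven hodd
  rw [alternatingEvenSum]
  simp only [map_sub, pow_apply_pow_apply, mul_sub, sum_sub_distrib]
  rw [heven, hodd, pow_zero, coe_one, id_eq]
  ring

end CommRing

section Field

variable {F : Type*} [Field F] (σ : F →+* F) {ℓ : ℕ} (hℓ : Odd ℓ) (hσ : σ ^ (2 * ℓ) = 1)
  (h2 : (2 : F) ≠ 0)
include hℓ hσ h2

lemma eq_zero_of_pow_two_apply_eq_neg {x : F} (hx : (σ ^ 2) x = -x) : x = 0 := by
  have hxx : x = -x :=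
    calc x = (σ ^ (2 * ℓ)) x := by rw [hσ, coe_one, id_eq]
      _ = ((σ ^ 2) ^ ℓ) x := by rw [pow_mul]
      _ = -x := by rw [pow_apply_of_apply_eq_neg _ hx, hℓ.neg_one_pow, neg_one_mul]
  have h2x : 2 * x = 0 := by linear_combination hxx
  exact (mul_eq_zero.mp h2x).resolve_left h2

variable {η : F} (hη0 : η ≠ 0) (hη : σ η = -η)
include hη0 hη

lemma canonical_decomposition (y : F) :
    (σ ^ ℓ) ((y + (σ ^ ℓ) y) / 2) = (y + (σ ^ ℓ) y) / 2 ∧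
    (σ ^ ℓ) (σ.alternatingEvenSum ℓ (y - (σ ^ ℓ) y) / (4 * η))
      = σ.alternatingEvenSum ℓ (y - (σ ^ ℓ) y) / (4 * η) ∧
    y = (y + (σ ^ ℓ) y) / 2 + ((σ ^ 2) (σ.alternatingEvenSum ℓ (y - (σ ^ ℓ) y) / (4 * η))
      + σ.alternatingEvenSum ℓ (y - (σ ^ ℓ) y) / (4 * η)) * η := by
  have hτη : (σ ^ ℓ) η = -η := by rw [pow_apply_of_apply_eq_neg σ hη, hℓ.neg_one_pow, neg_one_mul]
  have hη2 : (σ ^ 2) η = η := by rw [pow_apply_of_apply_eq_neg σ hη, even_two.neg_one_pow, one_mul]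
  refine ⟨?_, ?_, ?_⟩
  · rw [map_div₀, map_add, pow_apply_pow_apply, ← two_mul, hσ, coe_one, id_eq, map_ofNat, add_comm]
  · rw [map_div₀, map_mul, map_ofNat, hτη, pow_apply_alternatingEvenSum_sub σ hσ, mul_neg,
      neg_div_neg_eq]
  · rw [map_div₀, map_mul, map_ofNat, hη2, ← add_div,
      pow_two_apply_alternatingEvenSum_add_of_odd σ hℓ hσ]
    have h4 : (4 : F) ≠ 0 := by rw [show (4 : F) = 2 * 2 by norm_num]; exact mul_ne_zero h2 h2
    field_simp
    ring

lemma eq_canonical_of_decomposition {y A B : F} (hA : (σ ^ ℓ) A = A) (hB : (σ ^ ℓ) B = B)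
    (hy : y = A + ((σ ^ 2) B + B) * η) :
    A = (y + (σ ^ ℓ) y) / 2 ∧ B = σ.alternatingEvenSum ℓ (y - (σ ^ ℓ) y) / (4 * η) := by
  have hτη : (σ ^ ℓ) η = -η := by rw [pow_apply_of_apply_eq_neg σ hη, hℓ.neg_one_pow, neg_one_mul]
  set C := (σ ^ 2) B + B with hC
  have hτC : (σ ^ ℓ) C = C := by
    rw [hC, map_add, pow_apply_pow_apply, add_comm ℓ, ← pow_apply_pow_apply, hB]
  have hτy : (σ ^ ℓ) y = A - C * η := by
    rw [hy, map_add, map_mul, hA, hτC, hτη]; ring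
  have hA₀ : A = (y + (σ ^ ℓ) y) / 2 := by
    rw [hτy, hy, show A + C * η + (A - C * η) = 2 * A by ring, mul_div_cancel_left₀ _ h2]
  refine ⟨hA₀, ?_⟩
  obtain ⟨-, -, hy₀⟩ := canonical_decomposition σ hℓ hσ h2 hη0 hη y
  set B₀ := σ.alternatingEvenSum ℓ (y - (σ ^ ℓ) y) / (4 * η)
  rw [← hA₀] at hy₀
  have hC₀ : (σ ^ 2) B₀ + B₀ = C := mul_right_cancel₀ hη0 (by linear_combination hy - hy₀)
  have hx : (σ ^ 2) (B - B₀) = -(B - B₀) := by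
    rw [map_sub]; linear_combination -hC₀ - hC
  exact sub_eq_zero.mp (eq_zero_of_pow_two_apply_eq_neg σ hℓ hσ h2 hx)

theorem decomposition_iff (y A B : F) :
    ((σ ^ ℓ) A = A ∧ (σ ^ ℓ) B = B ∧ y = A + ((σ ^ 2) B + B) * η) ↔
      (A = (y + (σ ^ ℓ) y) / 2 ∧ B = σ.alternatingEvenSum ℓ (y - (σ ^ ℓ) y) / (4 * η)) := by
  refine ⟨fun ⟨hA, hB, hy⟩ => eq_canonical_of_decomposition σ hℓ hσ h2 hη0 hη hA hB hy, ?_⟩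
  rintro ⟨rfl, rfl⟩
  exact canonical_decomposition σ hℓ hσ h2 hη0 hη y

end Field

end RingHom

lemma iterateFrobenius_pow_apply {R : Type*} [CommSemiring R] (p m : ℕ) [ExpChar R p] (n : ℕ)
    (x : R) : (iterateFrobenius R p m ^ n) x = x ^ (p ^ m) ^ n := by
  rw [RingHom.coe_pow]
  exact congrFun (pow_iterate (p ^ m) n) x

theorem stmt8_general (p h q k ℓ : ℕ) (hp : p.Prime) (hpodd : Odd p) (hq : q = p ^ h)
    (hk : 1 ≤ k) (hℓ : ℓ = 2 * k + 1)
    (F : Type*) [Field F] [Fintype F] (hcard : Fintype.card F = q ^ (2 * ℓ))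
    (η : F) (hη0 : η ≠ 0) (hηq : η ^ q = -η)
    (g : F → F)
    (hg : ∀ y : F, g y =
      (∑ i ∈ Finset.Icc 1 (ℓ - 1), (-1 : F) ^ (i + 1) * y ^ (q ^ (2 * i))) +
      (∑ j ∈ Finset.Icc 0 (k - 1), (-1 : F) ^ (k + j + 1) * y ^ (q ^ (2 * j + 1))) +
      (∑ t ∈ Finset.Icc (k + 1) (ℓ - 1), (-1 : F) ^ (k + t) * y ^ (q ^ (2 * t + 1)))) :
    ∀ y A B : F,
      (A ^ (q ^ ℓ) = A ∧ B ^ (q ^ ℓ) = B ∧ y = A + (B ^ (q ^ 2) + B) * η) ↔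
      (A = (y + y ^ (q ^ ℓ)) / 2 ∧ B = (y - y ^ (q ^ ℓ) - g y) / (4 * η)) := by
  have : Fact p.Prime := ⟨hp⟩
  have : CharP F p := charP_of_card_eq_prime_pow (f := h * (2 * ℓ)) (by rw [hcard, hq, ← pow_mul])
  have h2 : (2 : F) ≠ 0 := Ring.two_ne_zero <| by
    rw [ringChar.eq F p]; rintro rfl; exact Nat.not_odd_iff_even.mpr even_two hpodd
  obtain ⟨σ, hσq⟩ : ∃ σ : F →+* F, ∀ n x, (σ ^ n) x = x ^ q ^ n :=
    ⟨iterateFrobenius F p h, fun n x => hq ▸ iterateFrobenius_pow_apply p h n x⟩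
  have hσ : σ ^ (2 * ℓ) = 1 := RingHom.ext fun x => by rw [hσq, ← hcard, FiniteField.pow_card]; rfl
  have hση : σ η = -η := by rw [← pow_one σ, hσq, pow_one, hηq]
  intro y A B
  subst hℓ
  simp only [← hσq, Nat.add_sub_cancel] at hg ⊢
  rw [hg, ← RingHom.alternatingEvenSum_sub_pow_apply σ hk hσ]
  exact RingHom.decomposition_iff σ ⟨k, rfl⟩ hσ h2 hη0 hση y A B

/-- In a finite field `F` of order `q^(2ℓ)` (`q` odd prime power, `ℓ = 2k+1`,
`k ≥ 1`), with `η ≠ 0`, `η^q = -η` and `g` as in the paper, every `y ∈ F` is written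
uniquely as `y = A + (B^(q^2) + B)η` with `A, B ∈ F_{q^ℓ}`; the unique pair is given by
`A = (y + y^(q^ℓ))/2` and `B = (y - y^(q^ℓ) - g y)/(4η)`. -/
theorem stmt8 (p h q k ℓ : ℕ) (hp : p.Prime) (hpodd : Odd p) (hq : q = p ^ h) (hh : 1 ≤ h)
    (hk : 1 ≤ k) (hℓ : ℓ = 2 * k + 1)
    (F : Type*) [Field F] [Fintype F] (hcard : Fintype.card F = q ^ (2 * ℓ))
    (η : F) (hη0 : η ≠ 0) (hηq : η ^ q = -η)
    (g : F → F)
    (hg : ∀ y : F, g y =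
      (∑ i ∈ Finset.Icc 1 (ℓ - 1), (-1 : F) ^ (i + 1) * y ^ (q ^ (2 * i))) +
      (∑ j ∈ Finset.Icc 0 (k - 1), (-1 : F) ^ (k + j + 1) * y ^ (q ^ (2 * j + 1))) +
      (∑ t ∈ Finset.Icc (k + 1) (ℓ - 1), (-1 : F) ^ (k + t) * y ^ (q ^ (2 * t + 1)))) :
    ∀ y A B : F,
      (A ^ (q ^ ℓ) = A ∧ B ^ (q ^ ℓ) = B ∧ y = A + (B ^ (q ^ 2) + B) * η) ↔
      (A = (y + y ^ (q ^ ℓ)) / 2 ∧ B = (y - y ^ (q ^ ℓ) - g y) / (4 * η)) :=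
  stmt8_general p h q k ℓ hp hpodd hq hk hℓ F hcard η hη0 hηq g hg
end

section
/- For every nonzero β ∈ F, the equation x^{q^{ℓ+d}−1} = β·(β^{q^ℓ})⁻¹ has exactly q − 1 solutions x in F. -/
/-!
`Fˣ` is cyclic of order `q^(2ℓ) - 1`, and
`gcd (q^(2ℓ) - 1) (q^(ℓ+d) - 1) = q^(gcd (2ℓ) (ℓ+d)) - 1 = q - 1` since `ℓ + d` is odd and
coprime to `ℓ`. In a finite cyclic group of order `m`, each value of `x ↦ x^n` is taken exactly
`gcd m n` times, and every `(gcd m n)`-th power is such a value. The right-hand side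
`β^(1 - q^ℓ)` is a `(q - 1)`-th power because `q - 1 ∣ q^ℓ - 1`.
-/

section PowerMap

variable {G : Type*} [CommGroup G]

theorem pow_gcd_card_mem_range_powMonoidHom [Finite G] (n : ℕ) (y : G) :
    y ^ (Nat.card G).gcd n ∈ (powMonoidHom n : G →* G).range := by
  refine ⟨y ^ Nat.gcdB (Nat.card G) n, ?_⟩
  calc (y ^ Nat.gcdB (Nat.card G) n) ^ n = y ^ ((n : ℤ) * Nat.gcdB (Nat.card G) n) := by
        rw [mul_comm, zpow_mul, zpow_natCast]
    _ = y ^ ((Nat.card G : ℤ) * Nat.gcdA (Nat.card G) n + n * Nat.gcdB (Nat.card G) n) := by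
        rw [zpow_add, zpow_mul y (Nat.card G), zpow_natCast, pow_card_eq_one', one_zpow, one_mul]
    _ = y ^ (Nat.card G).gcd n := by rw [← Nat.gcd_eq_gcd_ab, zpow_natCast]

theorem IsCyclic.ncard_pow_eq_of_mem_range [IsCyclic G] [Finite G] {n : ℕ} {c : G}
    (hc : c ∈ (powMonoidHom n : G →* G).range) :
    {x : G | x ^ n = c}.ncard = (Nat.card G).gcd n := by
  obtain ⟨x₀, rfl⟩ := hc
  rw [powMonoidHom_apply]
  have hfiber : {x : G | x ^ n = x₀ ^ n} = (x₀ * ·) '' (powMonoidHom n : G →* G).ker := by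
    ext x
    refine ⟨fun hx => ⟨x₀⁻¹ * x, ?_, mul_inv_cancel_left x₀ x⟩, ?_⟩
    · simp_all [MonoidHom.mem_ker, mul_pow]
    · rintro ⟨z, hz, rfl⟩
      simp_all [MonoidHom.mem_ker, mul_pow]
  rw [hfiber, Set.ncard_image_of_injective _ (mul_right_injective x₀), ← Nat.card_coe_set_eq,
    SetLike.coe_sort_coe, IsCyclic.card_powMonoidHom_ker]

end PowerMap

theorem ncard_pow_eq_eq_ncard_units {M₀ : Type*} [GroupWithZero M₀] {n : ℕ} (hn : n ≠ 0)
    {c : M₀} (hc : c ≠ 0) :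
    {x : M₀ | x ^ n = c}.ncard = {u : M₀ˣ | u ^ n = Units.mk0 c hc}.ncard := by
  have himage : {x : M₀ | x ^ n = c} = ((↑) : M₀ˣ → M₀) '' {u | u ^ n = Units.mk0 c hc} := by
    ext x
    refine ⟨fun hx => ⟨Units.mk0 x ?_, ?_, rfl⟩, ?_⟩
    · rintro rfl
      exact hc (hx ▸ zero_pow hn)
    · exact Units.ext (by simpa using hx)
    · rintro ⟨u, hu, rfl⟩
      simp_all [Units.ext_iff]
  rw [himage, Set.ncard_image_of_injective _ Units.val_injective]

theorem Nat.coprime_two_mul_add {ℓ d : ℕ} (hgcd : ℓ.gcd d = 1) (hodd : Odd (ℓ + d)) :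
    (2 * ℓ).Coprime (ℓ + d) :=
  Nat.Coprime.mul_left (Nat.coprime_two_left.mpr hodd)
    (by rwa [Nat.Coprime, Nat.gcd_self_add_right])

theorem stmt10_general (q ℓ d : ℕ) (hgcd : Nat.gcd ℓ d = 1)
    (hodd : Odd (ℓ + d))
    (F : Type*) [Field F] [Fintype F] (hcard : Fintype.card F = q ^ (2 * ℓ))
    (β : F) (hβ : β ≠ 0) :
    {x : F | x ^ (q ^ (ℓ + d) - 1) = β * (β ^ (q ^ ℓ))⁻¹}.ncard = q - 1 := by
  have hq : 2 ≤ q := by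
    by_contra! h
    have h1 := Fintype.one_lt_card (α := F)
    rw [hcard] at h1
    exact h1.not_ge (pow_le_one₀ q.zero_le (by omega))
  have hN : q ^ (ℓ + d) - 1 ≠ 0 := Nat.sub_ne_zero_of_lt (Nat.one_lt_pow hodd.pos.ne' hq)
  have hc : β * (β ^ q ^ ℓ)⁻¹ ≠ 0 := by simp [hβ]
  have hgcdU : (Nat.card Fˣ).gcd (q ^ (ℓ + d) - 1) = q - 1 := by
    rw [Nat.card_units, Nat.card_eq_fintype_card, hcard, Nat.pow_sub_one_gcd_pow_sub_one,
      Nat.coprime_two_mul_add hgcd hodd, pow_one]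
  obtain ⟨s, hs⟩ := Nat.sub_one_dvd_pow_sub_one q ℓ
  have hpow : Units.mk0 _ hc = ((Units.mk0 β hβ)⁻¹ ^ s) ^ (q - 1) := by
    ext
    rw [← pow_mul, mul_comm s, ← hs]
    simp only [Units.val_mk0, Units.val_pow_eq_pow_val, Units.val_inv_eq_inv_val, inv_pow]
    rw [pow_sub₀ β hβ (Nat.one_le_pow ℓ q (by omega)), pow_one, mul_inv, inv_inv, mul_comm]
  rw [ncard_pow_eq_eq_ncard_units hN hc, IsCyclic.ncard_pow_eq_of_mem_range, hgcdU]
  rw [hpow, ← hgcdU]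
  exact pow_gcd_card_mem_range_powMonoidHom _ _

/-- In a finite field `F` of order `q^(2ℓ)` (`q` odd prime power,
`gcd ℓ d = 1`, `0 < d < 2ℓ`, `ℓ + d` odd), for every nonzero `β` the equation
`x^(q^(ℓ+d)-1) = β·(β^(q^ℓ))⁻¹` has exactly `q - 1` solutions in `F`. -/
theorem stmt10 (p h q ℓ d : ℕ) (hp : p.Prime) (hpodd : Odd p) (hq : q = p ^ h) (hh : 1 ≤ h)
    (hℓ : 0 < ℓ) (hd : 0 < d) (hd2 : d < 2 * ℓ) (hgcd : Nat.gcd ℓ d = 1)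
    (hodd : Odd (ℓ + d))
    (F : Type*) [Field F] [Fintype F] (hcard : Fintype.card F = q ^ (2 * ℓ))
    (β : F) (hβ : β ≠ 0) :
    {x : F | x ^ (q ^ (ℓ + d) - 1) = β * (β ^ (q ^ ℓ))⁻¹}.ncard = q - 1 :=
  stmt10_general q ℓ d hgcd hodd F hcard β hβ
end

section
/- Let β ∈ F be a nonsquare in F (i.e. there is no t ∈ F with t² = β), and let σ ∈ F satisfy σ^q = σ and be a nonsquare in F_q (i.e. there is no t ∈ F with t^q = t and t² = σ). Then there exists ξ ∈ F such that ξ^{q^{ℓ+d}−1} = β·(β^{q^ℓ})⁻¹ and ξ^{q^ℓ+1} = σ. -/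
/-!
Fix a generator `ζ` of the cyclic group `Fˣ`, of order `(q - 1) · A · (q^ℓ + 1)` with
`A = (q^ℓ - 1)/(q - 1)`. A nonsquare `β` is `ζ^b` with `b` odd, and a nonsquare `σ` of `F_q` is
`ζ^(A (q^ℓ + 1) k)` with `k` odd. For `ξ = ζ^(A y)` the two equations become
`y ≡ k [mod q - 1]` and `t y ≡ -b [mod q^ℓ + 1]`, where `t = (q^(ℓ+d) - 1)/(q - 1)`.
Since `ℓ + d` is prime to `2ℓ`, a common prime factor of `t` and `q^ℓ + 1` would force `q ≡ 1`
and then divide both `ℓ + d` and `2`; so `t` is invertible modulo `q^ℓ + 1`. The moduli `q - 1`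
and `q^ℓ + 1` only share the factor `2`, and `k`, `-b t⁻¹` are both odd, so the Chinese
remainder theorem gives `y`.
-/

open Finset

theorem geom_sum_ne_zero_of_pow_eq_neg_one {R : Type*} [CommRing R] [Nontrivial R] {x : R}
    {ℓ n : ℕ} (hn : n.Coprime (2 * ℓ)) (hx : x ^ ℓ = -1) : ∑ i ∈ range n, x ^ i ≠ 0 := by
  intro h
  have hxn : x ^ n = 1 := by linear_combination (x - 1) * h - mul_geom_sum x n
  have hx2 : x ^ (2 * ℓ) = 1 := by rw [pow_mul', hx]; norm_num
  have hx1 : x = 1 := by simpa [Nat.Coprime.gcd_eq_one hn] using pow_gcd_eq_one.mpr ⟨hxn, hx2⟩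
  obtain ⟨m, rfl⟩ := (Nat.Coprime.coprime_mul_right_right hn).odd_of_right
  subst hx1
  simp only [one_pow, sum_const, card_range, nsmul_eq_mul, Nat.cast_add, Nat.cast_mul,
    Nat.cast_ofNat, Nat.cast_one, mul_one] at h hx
  exact one_ne_zero (by linear_combination h - m * hx : (1 : R) = 0)

theorem Int.isCoprime_geom_sum_pow_add_one (Q : ℤ) {ℓ n : ℕ} (hn : n.Coprime (2 * ℓ)) :
    IsCoprime (∑ i ∈ Finset.range n, Q ^ i) (Q ^ ℓ + 1) := by
  refine isCoprime_of_prime_dvd ?_ fun z hz hzt hzB => ?_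
  · rintro ⟨ht, hB⟩
    exact geom_sum_ne_zero_of_pow_eq_neg_one hn (eq_neg_of_add_eq_zero_left hB) ht
  · have := Fact.mk (Int.prime_iff_natAbs_prime.mp hz)
    refine geom_sum_ne_zero_of_pow_eq_neg_one (x := (Q : ZMod z.natAbs)) hn ?_ ?_
    · refine eq_neg_of_add_eq_zero_left ?_
      exact_mod_cast (ZMod.intCast_zmod_eq_zero_iff_dvd _ _).mpr (Int.natAbs_dvd.mpr hzB)
    · exact_mod_cast (ZMod.intCast_zmod_eq_zero_iff_dvd _ _).mpr (Int.natAbs_dvd.mpr hzt)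

theorem Int.exists_dvd_sub_and_dvd_sub {a b u v : ℤ} (h : (Int.gcd a b : ℤ) ∣ u - v) :
    ∃ y, a ∣ y - u ∧ b ∣ y - v := by
  obtain ⟨w, hw⟩ := h
  refine ⟨u - a * Int.gcdA a b * w, ⟨-(Int.gcdA a b * w), by ring⟩, ⟨Int.gcdB a b * w, ?_⟩⟩
  linear_combination hw + w * Int.gcd_eq_gcd_ab a b

theorem Int.exists_sub_one_dvd_sub_and_dvd_geom_sum_mul_add {Q : ℤ} (hQ : Odd Q) {ℓ n : ℕ}
    (hn : n.Coprime (2 * ℓ)) {b k : ℤ} (hb : Odd b) (hk : Odd k) :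
    ∃ y : ℤ, Q - 1 ∣ y - k ∧ Q ^ ℓ + 1 ∣ (∑ i ∈ Finset.range n, Q ^ i) * y + b := by
  set t := ∑ i ∈ Finset.range n, Q ^ i
  set B := Q ^ ℓ + 1
  obtain ⟨u, v, huv⟩ := Int.isCoprime_geom_sum_pow_add_one Q hn
  have hB : Even B := hQ.pow.add_one
  have hu : Odd u := by
    have : Odd (u * t) := by
      rw [show u * t = 1 - v * B by linear_combination huv]
      exact odd_one.sub_even (hB.mul_left v)
    exact (Int.odd_mul.mp this).1
  have hgcd : (Int.gcd (Q - 1) B : ℤ) ∣ 2 := by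
    have h1 : (Int.gcd (Q - 1) B : ℤ) ∣ Q ^ ℓ - 1 :=
      (Int.gcd_dvd_left _ _).trans (sub_one_dvd_pow_sub_one Q ℓ)
    simpa [B] using dvd_sub (Int.gcd_dvd_right (Q - 1) B) h1
  obtain ⟨y, hy1, c, hc⟩ := Int.exists_dvd_sub_and_dvd_sub (u := k) (v := -(b * u))
    (hgcd.trans (even_iff_two_dvd.mp (by simpa using hk.add_odd (hb.mul hu))))
  exact ⟨y, hy1, t * c + b * v, by linear_combination t * hc - b * huv⟩

section Group

variable {G : Type*} [Group G] {ζ : G}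

theorem zpow_eq_zpow_iff_dvd_sub {a c : ℤ} : ζ ^ a = ζ ^ c ↔ (orderOf ζ : ℤ) ∣ a - c :=
  zpow_eq_zpow_iff_modEq.trans (Int.modEq_iff_dvd.trans dvd_sub_comm)

theorem exists_odd_zpow_eq_of_pow_eq_self {x : G} {q : ℕ} {r : ℤ} (hq : 1 < q)
    (hζ : (orderOf ζ : ℤ) = (q - 1) * r) (hx : x ∈ Subgroup.zpowers ζ) (hxq : x ^ q = x)
    (hsq : ¬ ∃ t : G, t ^ q = t ∧ t ^ 2 = x) : ∃ k : ℤ, Odd k ∧ ζ ^ (r * k) = x := by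
  have hfix (s : ℤ) : (ζ ^ s) ^ q = ζ ^ s ↔ (q - 1) * r ∣ (q - 1) * s := by
    rw [← zpow_natCast, ← zpow_mul, zpow_eq_zpow_iff_dvd_sub, hζ, ← mul_sub_one, mul_comm s]
  obtain ⟨s, rfl⟩ := Subgroup.mem_zpowers_iff.mp hx
  obtain ⟨k, rfl⟩ := (mul_dvd_mul_iff_left (by omega)).mp ((hfix s).mp hxq)
  refine ⟨k, Int.not_even_iff_odd.mp ?_, rfl⟩
  rintro ⟨c, rfl⟩
  refine hsq ⟨ζ ^ (r * c), (hfix _).mpr (mul_dvd_mul_left _ (dvd_mul_right r c)), ?_⟩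
  rw [← zpow_natCast, ← zpow_mul]
  ring_nf

theorem IsCyclic.exists_pow_eq_mul_inv_pow_and_pow_eq [IsCyclic G] [Finite G] {q ℓ n : ℕ}
    (hq : Odd q) (hcard : Nat.card G = q ^ (2 * ℓ) - 1) (hn : n.Coprime (2 * ℓ)) {β σ : G}
    (hβ : ¬ IsSquare β) (hσq : σ ^ q = σ) (hσ : ¬ ∃ t : G, t ^ q = t ∧ t ^ 2 = σ) :
    ∃ ξ : G, ξ ^ (q ^ n - 1) = β * (β ^ q ^ ℓ)⁻¹ ∧ ξ ^ (q ^ ℓ + 1) = σ := by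
  obtain ⟨ζ, hζ⟩ := IsCyclic.exists_generator (α := G)
  have hq1 : 1 < q := by
    have : q ≠ 1 := by rintro rfl; exact Nat.card_pos.ne' (by simpa using hcard)
    have := hq.pos
    omega
  set Q : ℤ := (q : ℤ)
  set A := ∑ i ∈ range ℓ, Q ^ i
  have hA : Q ^ ℓ = (Q - 1) * A + 1 := by rw [mul_geom_sum]; ring
  have hcast (m : ℕ) : ((q ^ m - 1 : ℕ) : ℤ) = Q ^ m - 1 := by
    rw [Nat.cast_sub (Nat.one_le_pow _ _ hq.pos)]; push_cast; rfl
  have hord : (orderOf ζ : ℤ) = (Q - 1) * (A * (Q ^ ℓ + 1)) := by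
    rw [orderOf_eq_card_of_forall_mem_zpowers hζ, hcard, hcast, pow_mul', hA]; ring
  obtain ⟨b, rfl⟩ := Subgroup.mem_zpowers_iff.mp (hζ β)
  have hb : Odd b := Int.not_even_iff_odd.mp fun h => hβ (h.isSquare_zpow ζ)
  obtain ⟨k, hk, rfl⟩ := exists_odd_zpow_eq_of_pow_eq_self hq1 hord (hζ σ) hσq hσ
  obtain ⟨y, ⟨c₁, hc₁⟩, ⟨c₂, hc₂⟩⟩ :=
    Int.exists_sub_one_dvd_sub_and_dvd_geom_sum_mul_add ((Int.odd_coe_nat q).mpr hq) hn hb hk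
  refine ⟨ζ ^ (A * y), ?_, ?_⟩
  · rw [← zpow_natCast, ← zpow_mul, ← zpow_natCast, ← zpow_mul, ← zpow_neg, ← zpow_add,
      zpow_eq_zpow_iff_dvd_sub, hord, hcast, ← mul_geom_sum]
    exact ⟨c₂, by push_cast; linear_combination (Q - 1) * A * hc₂ + b * hA⟩
  · rw [← zpow_natCast, ← zpow_mul, zpow_eq_zpow_iff_dvd_sub, hord]
    exact ⟨c₁, by push_cast; linear_combination A * (Q ^ ℓ + 1) * hc₁⟩

end Group

theorem stmt12_general (p h q ℓ d : ℕ) (hpodd : Odd p) (hq : q = p ^ h)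
    (hgcd : Nat.gcd ℓ d = 1)
    (hodd : Odd (ℓ + d))
    (F : Type*) [Field F] [Fintype F] (hcard : Fintype.card F = q ^ (2 * ℓ))
    (β : F) (hβns : ¬ ∃ t : F, t ^ 2 = β)
    (σ : F) (hσq : σ ^ q = σ) (hσns : ¬ ∃ t : F, t ^ q = t ∧ t ^ 2 = σ) :
    ∃ ξ : F, ξ ^ (q ^ (ℓ + d) - 1) = β * (β ^ (q ^ ℓ))⁻¹ ∧ ξ ^ (q ^ ℓ + 1) = σ := by
  have hqodd : Odd q := hq ▸ hpodd.pow
  have hn : (ℓ + d).Coprime (2 * ℓ) :=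
    Nat.Coprime.mul_right hodd.coprime_two_right
      (Nat.coprime_self_add_left.mpr (Nat.coprime_comm.mp hgcd))
  have hβ0 : β ≠ 0 := by rintro rfl; exact hβns ⟨0, by simp⟩
  have hσ0 : σ ≠ 0 := by rintro rfl; exact hσns ⟨0, zero_pow hqodd.pos.ne', zero_pow two_ne_zero⟩
  have hβu : ¬ IsSquare (Units.mk0 β hβ0) := by
    rintro ⟨r, hr⟩
    exact hβns ⟨r, by simpa [sq] using congr_arg Units.val hr.symm⟩
  have hσu : ¬ ∃ t : Fˣ, t ^ q = t ∧ t ^ 2 = Units.mk0 σ hσ0 := by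
    rintro ⟨t, ht, ht2⟩
    exact hσns ⟨t, by simpa using congr_arg Units.val ht, by simpa using congr_arg Units.val ht2⟩
  obtain ⟨ξ, h₁, h₂⟩ := IsCyclic.exists_pow_eq_mul_inv_pow_and_pow_eq (G := Fˣ) hqodd
    (by rw [Nat.card_units, Nat.card_eq_fintype_card, hcard]) hn hβu
    (Units.ext (by simpa using hσq)) hσu
  exact ⟨ξ, by simpa using congr_arg Units.val h₁, by simpa using congr_arg Units.val h₂⟩

/-- In a finite field `F` of order `q^(2ℓ)` (`q` odd prime power,
`gcd ℓ d = 1`, `0 < d < 2ℓ`, `ℓ + d` odd), if `β` is a nonsquare in `F` and `σ` is a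
nonsquare in the subfield `F_q`, then there exists `ξ ∈ F` with
`ξ^(q^(ℓ+d)-1) = β·(β^(q^ℓ))⁻¹` and `ξ^(q^ℓ+1) = σ`. -/
theorem stmt12 (p h q ℓ d : ℕ) (hp : p.Prime) (hpodd : Odd p) (hq : q = p ^ h) (hh : 1 ≤ h)
    (hℓ : 0 < ℓ) (hd : 0 < d) (hd2 : d < 2 * ℓ) (hgcd : Nat.gcd ℓ d = 1)
    (hodd : Odd (ℓ + d))
    (F : Type*) [Field F] [Fintype F] (hcard : Fintype.card F = q ^ (2 * ℓ))
    (β : F) (hβns : ¬ ∃ t : F, t ^ 2 = β)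
    (σ : F) (hσq : σ ^ q = σ) (hσns : ¬ ∃ t : F, t ^ q = t ∧ t ^ 2 = σ) :
    ∃ ξ : F, ξ ^ (q ^ (ℓ + d) - 1) = β * (β ^ (q ^ ℓ))⁻¹ ∧ ξ ^ (q ^ ℓ + 1) = σ :=
  stmt12_general p h q ℓ d hpodd hq hgcd hodd F hcard β hβns σ hσq hσns
end

section
/- Define ψ(x) = (ω/ξ)·x + x^{q^ℓ} and φ(x) = x − (ω/ξ^{q^ℓ})·x^{q^ℓ}. Then ψ and φ are bijections of F, and for every x ∈ F and all A, B ∈ F with A^{q^ℓ} = A and B^{q^ℓ} = B one has 2A·φ(x)^{q^ℓ} + 2σ·β^{q^{2ℓ−d}}·B^{q^{2ℓ−d}}·φ(x)^{q^{2ℓ−d}} + 2σ·β·B·φ(x)^{q^d} = ψ( 2A·x + 2σ·B·ω·(β/ξ^{q^ℓ})·x^{q^d} + 2σ·B^{q^{2ℓ−d}}·ω·(β^{q^{2ℓ−d}}/ξ^{q^ℓ})·x^{q^{2ℓ−d}} ). In particular (φ, id, ψ) is an isotopism between the two presemifield multiplications so displayed. -/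
/-!
Write `τ x = x ^ q ^ ℓ`; since `|F| = q ^ (2ℓ)`, `τ` is an involutive field automorphism with
`τ ω = -ω`, and `ξ ^ (q ^ ℓ + 1) = σ` says `ξ · τ ξ = ω²`. For `c = ω / τ ξ` this gives
`c · τ c = -1`, so `φ x = x - c · τ x` is inverted by `y ↦ (y + c · τ y) / 2`, and `τ ∘ φ = ψ`.
The identity is then checked term by term: `ψ` is `F_{q^ℓ}`-linear, which handles the `A`-term,
and the term `σ β B φ(x) ^ q ^ d` is `ψ` of its partner on the right exactly because
`ξ ^ (q ^ (ℓ + d) - 1) = β / β ^ q ^ ℓ`. Applying `x ↦ x ^ q ^ (2ℓ - d)` to this relation yields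
the same relation for `(β ^ q ^ (2ℓ - d), 2ℓ - d)`, which handles the last term.
-/

open Function

section Frobenius

variable (R : Type*) [CommSemiring R] (p : ℕ) [ExpChar R p] (e : ℕ)

def qFrobenius (n : ℕ) : R →+* R := iterateFrobenius R p (e * n)

lemma qFrobenius_apply (n : ℕ) (x : R) : qFrobenius R p e n x = x ^ (p ^ e) ^ n := by
  rw [qFrobenius, iterateFrobenius_def, pow_mul]

lemma qFrobenius_qFrobenius (m n : ℕ) (x : R) :
    qFrobenius R p e m (qFrobenius R p e n x) = qFrobenius R p e (m + n) x := by
  rw [qFrobenius_apply, qFrobenius_apply, qFrobenius_apply, ← pow_mul, ← pow_add, add_comm]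

lemma qFrobenius_commute (m n : ℕ) : Function.Commute (qFrobenius R p e m) (qFrobenius R p e n) :=
  fun x => by rw [qFrobenius_qFrobenius, qFrobenius_qFrobenius, add_comm]

lemma qFrobenius_leftInverse {F : Type*} [Field F] [Fintype F] [ExpChar F p] {k m n : ℕ}
    (hcard : Fintype.card F = (p ^ e) ^ k) (h : m + n = k) :
    LeftInverse (qFrobenius F p e m) (qFrobenius F p e n) := fun x => by
  rw [qFrobenius_qFrobenius, h, qFrobenius_apply, ← hcard, FiniteField.pow_card]

end Frobenius

lemma pow_pow_eq_neg_one_pow_mul {M : Type*} [Monoid M] [HasDistribNeg M] {q : ℕ} (hq : Odd q)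
    {a : M} (ha : a ^ q = -a) (n : ℕ) : a ^ q ^ n = (-1) ^ n * a := by
  induction n with
  | zero => simp
  | succ n ih =>
    rw [pow_succ, pow_mul, ih, ((Commute.neg_one_left a).pow_left n).mul_pow, ← pow_mul,
      mul_comm n, pow_mul, hq.neg_one_pow, ha, pow_succ, mul_neg_one, mul_neg, neg_mul]

lemma bijective_sub_mul_map_of_mul_map_eq_neg_one {F : Type*} [Field F] {τ : F →+* F}
    (hτ : Involutive τ) (h2 : (2 : F) ≠ 0) {c : F} (hc : c * τ c = -1) :
    Bijective fun x => x - c * τ x := by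
  refine bijective_iff_has_inverse.2 ⟨fun y => (y + c * τ y) / 2, fun x => ?_, fun y => ?_⟩
  · simp only [map_sub, map_mul, hτ x]
    field_simp
    linear_combination (-x) * hc
  · simp only [map_div₀, map_add, map_mul, hτ y, map_ofNat]
    field_simp
    linear_combination (-y) * hc

namespace PresemifieldIsotopism

variable {F : Type*} [Field F] (τ : F →+* F) (ω ξ : F)

def psi : F →+ F :=
  AddMonoidHom.mk' (fun x => ω / ξ * x + τ x) fun x y => by simp only [map_add]; ring

def phi : F →+ F :=
  AddMonoidHom.mk' (fun x => x - ω / τ ξ * τ x) fun x y => by simp only [map_add]; ring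

@[simp] lemma psi_apply (x : F) : psi τ ω ξ x = ω / ξ * x + τ x := rfl

@[simp] lemma phi_apply (x : F) : phi τ ω ξ x = x - ω / τ ξ * τ x := rfl

variable {τ ω ξ}

lemma map_phi (hτ : Involutive τ) (hτω : τ ω = -ω) (x : F) :
    τ (phi τ ω ξ x) = psi τ ω ξ x := by
  simp only [phi_apply, psi_apply, map_sub, map_mul, map_div₀, hτ _, hτω]
  ring

lemma psi_mul_of_map_eq {b : F} (hb : τ b = b) (x : F) :
    psi τ ω ξ (b * x) = b * psi τ ω ξ x := by
  simp only [psi_apply, map_mul, hb]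
  ring

lemma ne_zero_of_mul_map_eq_sq (hξ : ξ * τ ξ = ω ^ 2) (hω : ω ≠ 0) : ξ ≠ 0 ∧ τ ξ ≠ 0 := by
  have : ξ * τ ξ ≠ 0 := hξ ▸ pow_ne_zero 2 hω
  exact ⟨left_ne_zero_of_mul this, right_ne_zero_of_mul this⟩

lemma phi_bijective (hτ : Involutive τ) (h2 : (2 : F) ≠ 0) (hτω : τ ω = -ω)
    (hξ : ξ * τ ξ = ω ^ 2) (hω : ω ≠ 0) : Bijective (phi τ ω ξ) := by
  obtain ⟨hξ0, hτξ0⟩ := ne_zero_of_mul_map_eq_sq hξ hω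
  refine bijective_sub_mul_map_of_mul_map_eq_neg_one hτ h2 ?_
  rw [map_div₀, hτ ξ, hτω]
  field_simp
  linear_combination hξ

lemma psi_bijective (hτ : Involutive τ) (h2 : (2 : F) ≠ 0) (hτω : τ ω = -ω)
    (hξ : ξ * τ ξ = ω ^ 2) (hω : ω ≠ 0) : Bijective (psi τ ω ξ) := by
  have : ⇑(psi τ ω ξ) = τ ∘ phi τ ω ξ := funext fun x => (map_phi hτ hτω x).symm
  rw [this]
  exact hτ.bijective.comp (phi_bijective hτ h2 hτω hξ hω)

/-- For `ρ = (· ^ q ^ m)`, `hγ` is the relation `ξ ^ (q ^ (ℓ + m) - 1) = γ / γ ^ q ^ ℓ`. -/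
lemma mul_map_phi_eq_psi (hτ : Involutive τ) (hτω : τ ω = -ω) (hξ : ξ * τ ξ = ω ^ 2)
    (hω : ω ≠ 0) {ρ : F →+* F} (hρτ : Function.Commute ρ τ) (hρω : ρ ω = ω) {γ b : F}
    (hγ : τ (ρ ξ) * τ γ = ξ * γ) (hb : τ b = b) (x : F) :
    b * γ * ρ (phi τ ω ξ x) = psi τ ω ξ (b * ω * (γ / τ ξ) * ρ x) := by
  obtain ⟨hξ0, hτξ0⟩ := ne_zero_of_mul_map_eq_sq hξ hω
  have hτρξ0 : τ (ρ ξ) ≠ 0 := by simpa using hξ0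
  simp only [phi_apply, psi_apply, map_sub, map_mul, map_div₀, hρτ.eq, hρω, hτ ξ, hτω, hb]
  field_simp
  linear_combination (b * γ * ρ x * τ (ρ ξ)) * hξ + (b * ω * τ (ρ x) * τ ξ) * hγ

lemma relation_map_of_leftInverse (hξ : ξ * τ ξ = ω ^ 2) (hω : ω ≠ 0) {ρ ρ' : F →+* F}
    (hρ'ρ : LeftInverse ρ' ρ) (hρ'τ : Function.Commute ρ' τ) (hρ'ω : ρ' ω = ω) {γ : F}
    (hγ : τ (ρ ξ) * τ γ = ξ * γ) : τ (ρ' ξ) * τ (ρ' γ) = ξ * ρ' γ := by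
  obtain ⟨hξ0, hτξ0⟩ := ne_zero_of_mul_map_eq_sq hξ hω
  have hρ'ξ0 : ρ' ξ ≠ 0 := by simpa using hξ0
  have h1 := congrArg ρ' hγ
  have h2 := congrArg ρ' hξ
  simp only [map_mul, map_pow, hρ'τ.eq, hρ'ρ ξ, hρ'ω] at h1 h2
  apply mul_left_cancel₀ (mul_ne_zero hρ'ξ0 hτξ0)
  linear_combination τ ξ * τ (ρ' γ) * h2 + ω ^ 2 * h1 - ρ' ξ * ρ' γ * hξ

lemma isotopism_identity (hτ : Involutive τ) (hτω : τ ω = -ω) (hξ : ξ * τ ξ = ω ^ 2)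
    (hω : ω ≠ 0) {ρ ρ' : F →+* F} (hρτ : Function.Commute ρ τ) (hρω : ρ ω = ω)
    (hρ'ρ : LeftInverse ρ' ρ) (hρ'τ : Function.Commute ρ' τ) (hρ'ω : ρ' ω = ω) {β A B : F}
    (hβ : τ (ρ ξ) * τ β = ξ * β) (hA : τ A = A) (hB : τ B = B) (x : F) :
    2 * A * τ (phi τ ω ξ x) + 2 * ω ^ 2 * ρ' β * ρ' B * ρ' (phi τ ω ξ x) +
        2 * ω ^ 2 * β * B * ρ (phi τ ω ξ x) =
      psi τ ω ξ (2 * A * x + 2 * ω ^ 2 * B * ω * (β / τ ξ) * ρ x +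
        2 * ω ^ 2 * ρ' B * ω * (ρ' β / τ ξ) * ρ' x) := by
  have hτσ : τ (2 * ω ^ 2) = 2 * ω ^ 2 := by rw [map_mul, map_pow, hτω, neg_sq, map_ofNat]
  rw [map_add, map_add, map_phi hτ hτω,
    psi_mul_of_map_eq (by rw [map_mul, map_ofNat, hA]),
    ← mul_map_phi_eq_psi hτ hτω hξ hω hρτ hρω hβ (by rw [map_mul, hτσ, hB]),
    ← mul_map_phi_eq_psi hτ hτω hξ hω hρ'τ hρ'ω
      (relation_map_of_leftInverse hξ hω hρ'ρ hρ'τ hρ'ω hβ) (by rw [map_mul, hτσ, ← hρ'τ.eq, hB])]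
  ring

end PresemifieldIsotopism

open PresemifieldIsotopism

theorem stmt13_general (p hexp q ℓ d : ℕ) (hp : p.Prime) (hpodd : Odd p) (hq : q = p ^ hexp)
    (hℓodd : Odd ℓ) (hdeven : Even d) (hd2 : d < 2 * ℓ)
    (F : Type*) [Field F] [Fintype F] (hcard : Fintype.card F = q ^ (2 * ℓ))
    (ω σ : F) (hω0 : ω ≠ 0) (hωq : ω ^ q = -ω) (hσ : σ = ω ^ 2)
    (β : F) (hβns : ¬ ∃ t : F, t ^ 2 = β)
    (ξ : F) (hξ1 : ξ ^ (q ^ (ℓ + d) - 1) = β * (β ^ (q ^ ℓ))⁻¹) (hξ2 : ξ ^ (q ^ ℓ + 1) = σ)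
    (ψ φ : F → F)
    (hψ : ∀ x : F, ψ x = (ω / ξ) * x + x ^ (q ^ ℓ))
    (hφ : ∀ x : F, φ x = x - (ω / ξ ^ (q ^ ℓ)) * x ^ (q ^ ℓ)) :
    Function.Bijective ψ ∧ Function.Bijective φ ∧
      ∀ (x A B : F), A ^ (q ^ ℓ) = A → B ^ (q ^ ℓ) = B →
        2 * A * (φ x) ^ (q ^ ℓ) +
            2 * σ * β ^ (q ^ (2 * ℓ - d)) * B ^ (q ^ (2 * ℓ - d)) *
              (φ x) ^ (q ^ (2 * ℓ - d)) +
            2 * σ * β * B * (φ x) ^ (q ^ d) =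
          ψ (2 * A * x + 2 * σ * B * ω * (β / ξ ^ (q ^ ℓ)) * x ^ (q ^ d) +
              2 * σ * B ^ (q ^ (2 * ℓ - d)) * ω *
                (β ^ (q ^ (2 * ℓ - d)) / ξ ^ (q ^ ℓ)) * x ^ (q ^ (2 * ℓ - d))) := by
  have : Fact p.Prime := ⟨hp⟩
  subst hq hσ
  have : CharP F p := charP_of_card_eq_prime_pow (hcard.trans (pow_mul p hexp (2 * ℓ)).symm)
  set Φ := qFrobenius F p hexp
  have hΦ (n : ℕ) (x : F) : x ^ (p ^ hexp) ^ n = Φ n x := (qFrobenius_apply F p hexp n x).symm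
  have hΦω (n : ℕ) : Φ n ω = (-1) ^ n * ω := by
    rw [← hΦ, pow_pow_eq_neg_one_pow_mul hpodd.pow hωq]
  have hΦω_even {n : ℕ} (hn : Even n) : Φ n ω = ω := by rw [hΦω, hn.neg_one_pow, one_mul]
  have hτ : Involutive (Φ ℓ) := qFrobenius_leftInverse p hexp hcard (two_mul ℓ).symm
  have hτω : Φ ℓ ω = -ω := by rw [hΦω, hℓodd.neg_one_pow, neg_one_mul]
  have h2 : (2 : F) ≠ 0 := Ring.two_ne_zero (ringChar.eq F p ▸ hpodd.ne_two_of_dvd_nat dvd_rfl)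
  have hξ : ξ * Φ ℓ ξ = ω ^ 2 := by rw [← hξ2, pow_succ', hΦ]
  have hβ : Φ ℓ (Φ d ξ) * Φ ℓ β = ξ * β := by
    have hβ0 : β ≠ 0 := fun h => hβns ⟨0, by simp [h]⟩
    rw [qFrobenius_qFrobenius, ← hΦ, ← hΦ,
      ← pow_sub_one_mul (pow_pos (pow_pos hp.pos _) _).ne', hξ1]
    field_simp
  simp only [hΦ] at hψ hφ ⊢
  obtain rfl : ψ = psi (Φ ℓ) ω ξ := funext hψ
  obtain rfl : φ = phi (Φ ℓ) ω ξ := funext hφ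
  refine ⟨psi_bijective hτ h2 hτω hξ hω0, phi_bijective hτ h2 hτω hξ hω0, fun x A B hA hB => ?_⟩
  exact isotopism_identity hτ hτω hξ hω0 (qFrobenius_commute F p hexp d ℓ) (hΦω_even hdeven)
    (qFrobenius_leftInverse p hexp hcard (by omega)) (qFrobenius_commute F p hexp _ ℓ)
    (hΦω_even ((Nat.even_sub hd2.le).2 (by simp [hdeven]))) hβ hA hB x

/-- Theorem 4.4 computation: with `ℓ` odd, `d` even, `gcd ℓ d = 1`,
`0 < d < 2ℓ`, `ω ≠ 0`, `ω^q = -ω`, `σ = ω²`, `β` a nonsquare in `F`, `ξ` with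
`ξ^(q^(ℓ+d)-1) = β·(β^(q^ℓ))⁻¹` and `ξ^(q^ℓ+1) = σ`: the maps
`ψ(x) = (ω/ξ)x + x^(q^ℓ)` and `φ(x) = x - (ω/ξ^(q^ℓ))x^(q^ℓ)` are bijections, and for all
`x ∈ F`, `A, B ∈ F_{q^ℓ}` the displayed identity holds; in particular `(φ, id, ψ)` is an
isotopism between the two presemifield multiplications so displayed. -/
theorem stmt13 (p hexp q ℓ d : ℕ) (hp : p.Prime) (hpodd : Odd p) (hq : q = p ^ hexp)
    (hh : 1 ≤ hexp) (hℓodd : Odd ℓ) (hdeven : Even d) (hd : 0 < d) (hd2 : d < 2 * ℓ)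
    (hgcd : Nat.gcd ℓ d = 1)
    (F : Type*) [Field F] [Fintype F] (hcard : Fintype.card F = q ^ (2 * ℓ))
    (ω σ : F) (hω0 : ω ≠ 0) (hωq : ω ^ q = -ω) (hσ : σ = ω ^ 2)
    (β : F) (hβns : ¬ ∃ t : F, t ^ 2 = β)
    (ξ : F) (hξ1 : ξ ^ (q ^ (ℓ + d) - 1) = β * (β ^ (q ^ ℓ))⁻¹) (hξ2 : ξ ^ (q ^ ℓ + 1) = σ)
    (ψ φ : F → F)
    (hψ : ∀ x : F, ψ x = (ω / ξ) * x + x ^ (q ^ ℓ))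
    (hφ : ∀ x : F, φ x = x - (ω / ξ ^ (q ^ ℓ)) * x ^ (q ^ ℓ)) :
    Function.Bijective ψ ∧ Function.Bijective φ ∧
      ∀ (x A B : F), A ^ (q ^ ℓ) = A → B ^ (q ^ ℓ) = B →
        2 * A * (φ x) ^ (q ^ ℓ) +
            2 * σ * β ^ (q ^ (2 * ℓ - d)) * B ^ (q ^ (2 * ℓ - d)) *
              (φ x) ^ (q ^ (2 * ℓ - d)) +
            2 * σ * β * B * (φ x) ^ (q ^ d) =
          ψ (2 * A * x + 2 * σ * B * ω * (β / ξ ^ (q ^ ℓ)) * x ^ (q ^ d) +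
              2 * σ * B ^ (q ^ (2 * ℓ - d)) * ω *
                (β ^ (q ^ (2 * ℓ - d)) / ξ ^ (q ^ ℓ)) * x ^ (q ^ (2 * ℓ - d))) :=
  stmt13_general p hexp q ℓ d hp hpodd hq hℓodd hdeven hd2 F hcard ω σ hω0 hωq hσ β hβns ξ hξ1 hξ2 ψ
    φ hψ hφ
end

section
/- Assume q ≡ 3 (mod 4). Let β̄ ∈ F with β̄^{q^2} = β̄ be a nonsquare in the subfield F_{q^2}, i.e. there is no t ∈ F with t^{q^2} = t and t² = β̄. Then the equation x^{2q^ℓ − 2} = −β̄^{q−1} has no solution x in F. -/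
/-!
Raise `x ^ (2q^ℓ - 2) = -β ^ (q - 1)` to the power `(q^ℓ + 1)/2`, which is even because
`q^ℓ ≡ 3 (mod 4)`. The left side becomes `x ^ (|F| - 1) = 1`; on the right the sign disappears
and, as `β ^ (q^ℓ) = β ^ q` for odd `ℓ`, what remains is `β ^ ((q^2 - 1)/2) = 1`. In the cyclic
group `Fˣ` this Euler-criterion identity makes `β` the square of an element of `F_{q^2}`.
-/

theorem IsCyclic.exists_pow_eq_of_pow_eq_one {G : Type*} [Group G] [IsCyclic G] [Finite G]
    {d e : ℕ} (hde : d * e = Nat.card G) {b : G} (hb : b ^ d = 1) : ∃ s : G, s ^ e = b := by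
  obtain ⟨g, hg⟩ := IsCyclic.exists_generator (α := G)
  obtain ⟨k, rfl⟩ : ∃ k : ℕ, g ^ k = b := mem_powers_iff_mem_zpowers.mpr (hg b)
  have hd : 0 < d := Nat.pos_of_mul_pos_right (hde ▸ Nat.card_pos)
  have hdvd : d * e ∣ k * d := by
    rw [hde, ← orderOf_eq_card_of_forall_mem_zpowers hg]
    exact orderOf_dvd_of_pow_eq_one (by rwa [pow_mul])
  obtain ⟨c, rfl⟩ : e ∣ k := Nat.dvd_of_mul_dvd_mul_right hd (by rwa [mul_comm d] at hdvd)
  exact ⟨g ^ c, by rw [← pow_mul, mul_comm]⟩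

theorem IsCyclic.exists_sq_eq_of_pow_eq_one {G : Type*} [Group G] [IsCyclic G] [Finite G]
    {d : ℕ} (hd : 2 * d ∣ Nat.card G) {b : G} (hb : b ^ d = 1) :
    ∃ t : G, t ^ (2 * d) = 1 ∧ t ^ 2 = b := by
  obtain ⟨e, he⟩ := hd
  obtain ⟨s, rfl⟩ := IsCyclic.exists_pow_eq_of_pow_eq_one (e := 2 * e) (by rw [he]; ring) hb
  refine ⟨s ^ e, ?_, by rw [← pow_mul, mul_comm]⟩
  rw [← pow_mul, show e * (2 * d) = Nat.card G by rw [he]; ring, pow_card_eq_one']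

theorem FiniteField.exists_sq_eq_of_pow_eq_one {F : Type*} [Field F] [Fintype F] {d : ℕ}
    (hd : 2 * d ∣ Fintype.card F - 1) {β : F} (hβ : β ≠ 0) (h : β ^ d = 1) :
    ∃ t : F, t ^ (2 * d + 1) = t ∧ t ^ 2 = β := by
  classical
  rw [← Fintype.card_units, ← Nat.card_eq_fintype_card] at hd
  obtain ⟨t, ht, hsq⟩ := IsCyclic.exists_sq_eq_of_pow_eq_one hd (b := Units.mk0 β hβ)
    (by ext; simpa using h)
  exact ⟨t, by rw [pow_succ, ← Units.val_pow_eq_pow_val, ht, Units.val_one, one_mul],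
    by rw [← Units.val_pow_eq_pow_val, hsq, Units.val_mk0]⟩

theorem pow_pow_odd_eq_pow_of_pow_pow_two_eq {M : Type*} [Monoid M] {β : M} {q ℓ : ℕ}
    (hβ : β ^ (q ^ 2) = β) (hℓ : Odd ℓ) : β ^ (q ^ ℓ) = β ^ q := by
  obtain ⟨j, rfl⟩ := hℓ
  have hfix : ∀ i : ℕ, β ^ ((q ^ 2) ^ i) = β := by
    intro i
    induction i with
    | zero => simp
    | succ i ih => rw [pow_succ, pow_mul, ih, hβ]
  rw [pow_succ, pow_mul q, pow_mul, hfix]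

theorem Nat.pow_mod_four_of_odd {q ℓ : ℕ} (hq : q % 4 = 3) (hℓ : Odd ℓ) : q ^ ℓ % 4 = 3 := by
  obtain ⟨j, rfl⟩ := hℓ
  rw [pow_succ, pow_mul, Nat.mul_mod, Nat.pow_mod, Nat.pow_mod q, hq]
  norm_num [Nat.pow_mod]

theorem Nat.two_mul_sub_two_mul_eq_sq_sub_one {Q k : ℕ} (h : Q + 1 = 2 * k) :
    (2 * Q - 2) * k = Q ^ 2 - 1 := by
  obtain ⟨m, rfl⟩ : ∃ m, k = m + 1 := ⟨k - 1, by omega⟩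
  obtain rfl : Q = 2 * m + 1 := by omega
  rw [show 2 * (2 * m + 1) - 2 = 4 * m by omega]
  exact (Nat.sub_eq_of_eq_add (by ring)).symm

theorem stmt19_general (q ℓ : ℕ) (hℓodd : Odd ℓ) (hq4 : q % 4 = 3)
    (F : Type*) [Field F] [Fintype F] (hcard : Fintype.card F = q ^ (2 * ℓ))
    (β : F) (hβ : β ^ (q ^ 2) = β)
    (hβns : ¬ ∃ t : F, t ^ (q ^ 2) = t ∧ t ^ 2 = β) :
    ¬ ∃ x : F, x ^ (2 * q ^ ℓ - 2) = -β ^ (q - 1) := by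
  rintro ⟨x, hx⟩
  obtain ⟨r, hr⟩ : ∃ r, q = 2 * r + 1 := ⟨q / 2, by omega⟩
  obtain ⟨f, hf⟩ : ∃ f, q ^ ℓ = 4 * f + 3 :=
    ⟨q ^ ℓ / 4, by have := Nat.pow_mod_four_of_odd hq4 hℓodd; omega⟩
  have hβ0 : β ≠ 0 := by
    rintro rfl
    exact hβns ⟨0, zero_pow (pow_ne_zero _ (by omega)), zero_pow two_ne_zero⟩
  have hx0 : x ≠ 0 := by
    rintro rfl
    rw [zero_pow (by omega), eq_comm, neg_eq_zero] at hx
    exact pow_ne_zero _ hβ0 hx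
  have hexp : (2 * q ^ ℓ - 2) * (2 * f + 2) = Fintype.card F - 1 := by
    rw [hcard, pow_mul']
    exact Nat.two_mul_sub_two_mul_eq_sq_sub_one (by omega)
  have heuler : β ^ (r * (q + 1)) = 1 := calc
    β ^ (r * (q + 1)) = (β ^ (q ^ ℓ) * β) ^ r := by
      rw [pow_pow_odd_eq_pow_of_pow_pow_two_eq hβ hℓodd, ← pow_succ, ← pow_mul, mul_comm]
    _ = (-β ^ (q - 1)) ^ (2 * f + 2) := by
      rw [Even.neg_pow ⟨f + 1, by ring⟩, ← pow_succ, ← pow_mul, ← pow_mul, hf,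
        show q - 1 = 2 * r by omega]
      ring_nf
    _ = x ^ (Fintype.card F - 1) := by rw [← hx, ← pow_mul, hexp]
    _ = 1 := FiniteField.pow_card_sub_one_eq_one x hx0
  have hq2 : q ^ 2 = 2 * (r * (q + 1)) + 1 := by rw [hr]; ring
  have hdvd : 2 * (r * (q + 1)) ∣ Fintype.card F - 1 := by
    have := Nat.sub_dvd_pow_sub_pow (q ^ 2) 1 ℓ
    rwa [one_pow, ← pow_mul, ← hcard, hq2, Nat.add_sub_cancel] at this
  obtain ⟨t, ht, hsq⟩ := FiniteField.exists_sq_eq_of_pow_eq_one hdvd hβ0 heuler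
  exact hβns ⟨t, hq2 ▸ ht, hsq⟩

/-- if `q ≡ 3 (mod 4)`, `ℓ ≥ 1` is odd, and `β̄ ∈ F_{q^2}` is a nonsquare
in `F_{q^2}`, then the equation `x^(2q^ℓ - 2) = -β̄^(q-1)` has no solution in `F`. -/
theorem stmt19 (p hexp q ℓ : ℕ) (hp : p.Prime) (hpodd : Odd p) (hq : q = p ^ hexp)
    (hh : 1 ≤ hexp) (hℓ1 : 1 ≤ ℓ) (hℓodd : Odd ℓ) (hq4 : q % 4 = 3)
    (F : Type*) [Field F] [Fintype F] (hcard : Fintype.card F = q ^ (2 * ℓ))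
    (β : F) (hβ : β ^ (q ^ 2) = β)
    (hβns : ¬ ∃ t : F, t ^ (q ^ 2) = t ∧ t ^ 2 = β) :
    ¬ ∃ x : F, x ^ (2 * q ^ ℓ - 2) = -β ^ (q - 1) :=
  stmt19_general q ℓ hℓodd hq4 F hcard β hβ hβns
end
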